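/- arXiv:1412.3660 — 13 statements merged into one kernel-verified Lean document; each statement's English description precedes it below -/
import Mathlib

section
/- For every continuous linear functional f on H there exists a unique u⁰ ∈ ker B such that ⟨A u⁰, A v⟩_U = f(v) for all v ∈ ker B. -/
/-!
On the closed subspace `ker B` the lower bound reads `c₁ ‖v‖ ≤ ‖A v‖`, so `(u, v) ↦ ⟪A u, A v⟫`
is a bounded coercive bilinear form on a Hilbert space, and the Lax–Milgram theorem gives
exactly one representative of `f` restricted to `ker B`.
-/

open RealInnerProductSpace

theorem IsCoercive.existsUnique_apply_eq {W : Type*} [NormedAddCommGroup W]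
    [InnerProductSpace ℝ W] [CompleteSpace W] {b : W →L[ℝ] W →L[ℝ] ℝ}
    (coercive : IsCoercive b) (F : W →L[ℝ] ℝ) :
    ∃! u, ∀ v, b u v = F v := by
  have hchar : ∀ u, (∀ v, b u v = F v) ↔
      coercive.continuousLinearEquivOfBilin u = (InnerProductSpace.toDual ℝ W).symm F := by
    intro u
    rw [ext_iff_inner_right ℝ]
    simp only [continuousLinearEquivOfBilin_apply, InnerProductSpace.toDual_symm_apply]
  simp only [hchar]
  exact coercive.continuousLinearEquivOfBilin.bijective.existsUnique _

namespace ContinuousLinearMap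

variable {W U : Type*} [NormedAddCommGroup W] [InnerProductSpace ℝ W]
  [NormedAddCommGroup U] [InnerProductSpace ℝ U]

theorem isCoercive_innerSL_bilinearComp (T : W →L[ℝ] U) {c : ℝ} (hc : 0 < c)
    (hT : ∀ w, c * ‖w‖ ≤ ‖T w‖) : IsCoercive ((innerSL ℝ).bilinearComp T T) := by
  refine ⟨c * c, mul_pos hc hc, fun w => ?_⟩
  calc c * c * ‖w‖ * ‖w‖ = (c * ‖w‖) * (c * ‖w‖) := by ring
    _ ≤ ‖T w‖ * ‖T w‖ := mul_self_le_mul_self (by positivity) (hT w)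
    _ = (innerSL ℝ).bilinearComp T T w w := by simp [sq]

theorem existsUnique_inner_map_map_eq [CompleteSpace W] (T : W →L[ℝ] U) {c : ℝ} (hc : 0 < c)
    (hT : ∀ w, c * ‖w‖ ≤ ‖T w‖) (F : W →L[ℝ] ℝ) :
    ∃! u, ∀ v, ⟪T u, T v⟫ = F v :=
  (T.isCoercive_innerSL_bilinearComp hc hT).existsUnique_apply_eq F

end ContinuousLinearMap

theorem stmt_1_general
    {H U V : Type*}
    [NormedAddCommGroup H] [InnerProductSpace ℝ H] [CompleteSpace H]
    [NormedAddCommGroup U] [InnerProductSpace ℝ U]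
    [NormedAddCommGroup V] [InnerProductSpace ℝ V]
    (A : H →L[ℝ] U) (B : H →L[ℝ] V)
    (c₁ : ℝ) (hc₁ : 0 < c₁)
    (hlow : ∀ v : H, c₁ * ‖v‖ ≤ ‖A v‖ + ‖B v‖)
    (f : H →L[ℝ] ℝ) :
    ∃! u₀ : H, B u₀ = 0 ∧ ∀ v : H, B v = 0 → ⟪A u₀, A v⟫ = f v := by
  let K := LinearMap.ker (B : H →ₗ[ℝ] V)
  have : CompleteSpace K := (ContinuousLinearMap.isClosed_ker B).completeSpace_coe
  have hlowK : ∀ w : K, c₁ * ‖w‖ ≤ ‖A w‖ := fun w => by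
    simpa [show B w = 0 from w.2] using hlow w
  obtain ⟨u, hu, huniq⟩ := (A.comp K.subtypeL).existsUnique_inner_map_map_eq hc₁ hlowK
    (f.comp K.subtypeL)
  refine ⟨u, ⟨u.2, fun v hv => hu ⟨v, hv⟩⟩, fun u' ⟨hu'K, hu'⟩ => ?_⟩
  exact congrArg Subtype.val (huniq ⟨u', hu'K⟩ fun v => hu' v v.2)

/-- For every continuous linear functional f on H there exists a unique u⁰ ∈ ker B such
that ⟨A u⁰, A v⟩_U = f(v) for all v ∈ ker B. -/
theorem stmt_1
    {H U V : Type*}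
    [NormedAddCommGroup H] [InnerProductSpace ℝ H] [CompleteSpace H]
    [NormedAddCommGroup U] [InnerProductSpace ℝ U] [CompleteSpace U]
    [NormedAddCommGroup V] [InnerProductSpace ℝ V] [CompleteSpace V]
    (A : H →L[ℝ] U) (B : H →L[ℝ] V)
    (c₁ c₂ : ℝ) (hc₁ : 0 < c₁) (hc₂ : 0 < c₂)
    (hlow : ∀ v : H, c₁ * ‖v‖ ≤ ‖A v‖ + ‖B v‖)
    (hup : ∀ v : H, ‖A v‖ + ‖B v‖ ≤ c₂ * ‖v‖)
    (f : H →L[ℝ] ℝ) :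
    ∃! u₀ : H, B u₀ = 0 ∧ ∀ v : H, B v = 0 → ⟪A u₀, A v⟫ = f v :=
  stmt_1_general A B c₁ hc₁ hlow f
end

section
/- There exist a constant C₀ > 0 and a linear functional ζ defined on the range W = B(H) ⊆ V such that f(v) − ⟨A u⁰, A v⟩_U = ζ(B v) for every v ∈ H, and |ζ(w)| ≤ C₀ · inf{‖v‖_H : v ∈ H, B v = w} for every w ∈ W. -/
open RealInnerProductSpace

/-! The functional `g v = f v - ⟪A u₀, A v⟫` is continuous and, by the defining property of `u₀`,
vanishes on `ker B`, so it factors through `H ⧸ ker B ≃ range B` as a functional `ζ`. Every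
preimage `v` of `w` then gives `|ζ w| = |g v| ≤ ‖g‖ ‖v‖`; take the infimum over `v`. -/

theorem LinearMap.exists_comp_rangeRestrict_eq_of_ker_le {R M M₂ P : Type*} [Ring R]
    [AddCommGroup M] [Module R M] [AddCommGroup M₂] [Module R M₂] [AddCommGroup P] [Module R P]
    (B : M →ₗ[R] M₂) (g : M →ₗ[R] P) (h : LinearMap.ker B ≤ LinearMap.ker g) :
    ∃ ζ : LinearMap.range B →ₗ[R] P, ζ.comp B.rangeRestrict = g := by
  refine ⟨(LinearMap.ker B).liftQ g h ∘ₗ B.quotKerEquivRange.symm.toLinearMap, ?_⟩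
  ext v
  exact congrArg ((LinearMap.ker B).liftQ g h) (B.quotKerEquivRange_symm_apply_image v ⟨v, rfl⟩)

theorem LinearMap.abs_le_mul_sInf_norm_preimage {E F : Type*} [SeminormedAddCommGroup E]
    [Module ℝ E] [AddCommGroup F] [Module ℝ F] (B : E →ₗ[ℝ] F) (ζ : LinearMap.range B →ₗ[ℝ] ℝ)
    {C : ℝ} (hC : 0 < C) (hζ : ∀ v, |ζ (B.rangeRestrict v)| ≤ C * ‖v‖)
    (w : LinearMap.range B) :
    |ζ w| ≤ C * sInf {r : ℝ | ∃ v : E, B v = (w : F) ∧ ‖v‖ = r} := by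
  obtain ⟨v₀, hv₀⟩ := w.2
  rw [← div_le_iff₀' hC]
  refine le_csInf ⟨‖v₀‖, v₀, hv₀, rfl⟩ ?_
  rintro _ ⟨v, hv, rfl⟩
  have hw : B.rangeRestrict v = w := Subtype.ext hv
  rw [div_le_iff₀' hC, ← hw]
  exact hζ v

theorem stmt_2_general
    {H U V : Type*}
    [NormedAddCommGroup H] [InnerProductSpace ℝ H]
    [NormedAddCommGroup U] [InnerProductSpace ℝ U]
    [NormedAddCommGroup V] [InnerProductSpace ℝ V]
    (A : H →L[ℝ] U) (B : H →L[ℝ] V)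
    (f : H →L[ℝ] ℝ)
    (u₀ : H)
    (hu₀' : ∀ v : H, B v = 0 → ⟪A u₀, A v⟫ = f v) :
    ∃ C₀ : ℝ, 0 < C₀ ∧
      ∃ ζ : ↥(LinearMap.range (B : H →ₗ[ℝ] V)) →ₗ[ℝ] ℝ,
        (∀ v : H, f v - ⟪A u₀, A v⟫ = ζ ⟨B v, ⟨v, rfl⟩⟩) ∧
        ∀ w : ↥(LinearMap.range (B : H →ₗ[ℝ] V)),
          |ζ w| ≤ C₀ * sInf {r : ℝ | ∃ v : H, B v = (w : V) ∧ ‖v‖ = r} := by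
  set g : H →L[ℝ] ℝ := f - (innerSL ℝ (A u₀)).comp A
  have hker : LinearMap.ker (B : H →ₗ[ℝ] V) ≤ LinearMap.ker (g : H →ₗ[ℝ] ℝ) := fun v hv => by
    simp [g, hu₀' v hv]
  obtain ⟨ζ, hζ⟩ := LinearMap.exists_comp_rangeRestrict_eq_of_ker_le _ _ hker
  have hζg : ∀ v, ζ ((B : H →ₗ[ℝ] V).rangeRestrict v) = g v := fun v => LinearMap.congr_fun hζ v
  refine ⟨‖g‖ + 1, by positivity, ζ, fun v => (hζg v).symm, ?_⟩
  refine LinearMap.abs_le_mul_sInf_norm_preimage _ ζ (by positivity) fun v => ?_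
  rw [hζg, ← Real.norm_eq_abs]
  exact (g.le_opNorm v).trans (by gcongr; linarith)

/-- There exist a constant C₀ > 0 and a linear functional ζ defined on the range
W = B(H) ⊆ V such that f(v) − ⟨A u⁰, A v⟩_U = ζ(B v) for every v ∈ H, and
|ζ(w)| ≤ C₀ · inf{‖v‖_H : v ∈ H, B v = w} for every w ∈ W. -/
theorem stmt_2
    {H U V : Type*}
    [NormedAddCommGroup H] [InnerProductSpace ℝ H] [CompleteSpace H]
    [NormedAddCommGroup U] [InnerProductSpace ℝ U] [CompleteSpace U]
    [NormedAddCommGroup V] [InnerProductSpace ℝ V] [CompleteSpace V]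
    (A : H →L[ℝ] U) (B : H →L[ℝ] V)
    (c₁ c₂ : ℝ) (hc₁ : 0 < c₁) (hc₂ : 0 < c₂)
    (hlow : ∀ v : H, c₁ * ‖v‖ ≤ ‖A v‖ + ‖B v‖)
    (hup : ∀ v : H, ‖A v‖ + ‖B v‖ ≤ c₂ * ‖v‖)
    (f : H →L[ℝ] ℝ)
    (u₀ : H) (hu₀ : B u₀ = 0)
    (hu₀' : ∀ v : H, B v = 0 → ⟪A u₀, A v⟫ = f v) :
    ∃ C₀ : ℝ, 0 < C₀ ∧
      ∃ ζ : ↥(LinearMap.range (B : H →ₗ[ℝ] V)) →ₗ[ℝ] ℝ,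
        (∀ v : H, f v - ⟪A u₀, A v⟫ = ζ ⟨B v, ⟨v, rfl⟩⟩) ∧
        ∀ w : ↥(LinearMap.range (B : H →ₗ[ℝ] V)),
          |ζ w| ≤ C₀ * sInf {r : ℝ | ∃ v : H, B v = (w : V) ∧ ‖v‖ = r} :=
  stmt_2_general A B f u₀ hu₀'
end

section
/- For every ε > 0, the element v^ε := ε⁻² (u^ε − u⁰) is orthogonal to ker B with respect to the inner product (x, y)_ℋ := ⟨A x, A y⟩_U + ⟨B x, B y⟩_V, and it satisfies ε² ⟨A v^ε, A v⟩_U + ⟨B v^ε, B v⟩_V = f(v) − ⟨A u⁰, A v⟩_U for all v ∈ H; in particular u^ε = u⁰ + ε² v^ε is an orthogonal decomposition with respect to (·,·)_ℋ. -/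
open RealInnerProductSpace

/-- For every ε > 0, the element v^ε := ε⁻² (u^ε − u⁰) is orthogonal to ker B with
respect to the inner product (x, y)_ℋ := ⟨A x, A y⟩_U + ⟨B x, B y⟩_V, and it satisfies
ε² ⟨A v^ε, A v⟩_U + ⟨B v^ε, B v⟩_V = f(v) − ⟨A u⁰, A v⟩_U for all v ∈ H; in particular
u^ε = u⁰ + ε² v^ε is an orthogonal decomposition with respect to (·,·)_ℋ. -/
theorem stmt_3
    {H U V : Type*}
    [NormedAddCommGroup H] [InnerProductSpace ℝ H] [CompleteSpace H]
    [NormedAddCommGroup U] [InnerProductSpace ℝ U] [CompleteSpace U]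
    [NormedAddCommGroup V] [InnerProductSpace ℝ V] [CompleteSpace V]
    (A : H →L[ℝ] U) (B : H →L[ℝ] V)
    (c₁ c₂ : ℝ) (hc₁ : 0 < c₁) (hc₂ : 0 < c₂)
    (hlow : ∀ v : H, c₁ * ‖v‖ ≤ ‖A v‖ + ‖B v‖)
    (hup : ∀ v : H, ‖A v‖ + ‖B v‖ ≤ c₂ * ‖v‖)
    (f : H →L[ℝ] ℝ)
    (ε : ℝ) (hε : 0 < ε)
    (uε : H) (huε : ∀ v : H, ⟪A uε, A v⟫ + (ε ^ 2)⁻¹ * ⟪B uε, B v⟫ = f v)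
    (u₀ : H) (hu₀ : B u₀ = 0)
    (hu₀' : ∀ v : H, B v = 0 → ⟪A u₀, A v⟫ = f v)
    (vε : H) (hvε : vε = (ε ^ 2)⁻¹ • (uε - u₀)) :
    (∀ z : H, B z = 0 → ⟪A vε, A z⟫ + ⟪B vε, B z⟫ = 0) ∧
    (∀ v : H, ε ^ 2 * ⟪A vε, A v⟫ + ⟪B vε, B v⟫ = f v - ⟪A u₀, A v⟫) ∧
    uε = u₀ + ε ^ 2 • vε ∧
    ⟪A u₀, A vε⟫ + ⟪B u₀, B vε⟫ = 0 := by
  have hε2 : (ε ^ 2) ≠ 0 := by positivity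
  have hAv : ∀ v : H, ⟪A vε, A v⟫ = (ε ^ 2)⁻¹ * (⟪A uε, A v⟫ - ⟪A u₀, A v⟫) := by
    intro v
    simp [hvε, map_smul, map_sub, inner_smul_left, inner_sub_left]
  have hBv : ∀ v : H, ⟪B vε, B v⟫ = (ε ^ 2)⁻¹ * ⟪B uε, B v⟫ := by
    intro v
    simp [hvε, map_smul, map_sub, inner_smul_left, inner_sub_left, hu₀]
  have horth : ∀ z : H, B z = 0 → ⟪A vε, A z⟫ + ⟪B vε, B z⟫ = 0 := by
    intro z hz
    have h1 : ⟪A uε, A z⟫ = f z := by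
      have := huε z; simpa [hz] using this
    have h2 := hu₀' z hz
    rw [hAv, hBv, hz, inner_zero_right, h1, h2]
    ring
  refine ⟨horth, ?_, ?_, ?_⟩
  · intro v
    have h1 := huε v
    rw [hAv v, hBv v]
    field_simp at h1 ⊢
    linear_combination h1
  · rw [hvε, smul_smul, mul_inv_cancel₀ hε2, one_smul]
    abel
  · have := horth u₀ hu₀
    linarith [this, real_inner_comm (A vε) (A u₀), real_inner_comm (B vε) (B u₀)]
end

section
/- As ε → 0⁺, the solutions u^ε converge to u⁰ in H, i.e. lim_{ε→0⁺} ‖u^ε − u⁰‖_H = 0. -/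
/-!
Write `e = u ε - u₀` and let `h` represent the residual functional `v ↦ f v - ⟪A u₀, A v⟫`,
which vanishes on `ker B`; hence `h ∈ (ker B)ᗮ = closure (range B†)`. Testing the penalized
equation with `e` gives the energy identity `‖A e‖² + ε⁻²‖B e‖² = ⟪h, e⟫`. Splitting
`⟪h, e⟫ = ⟪h - (B†) y, e⟫ + ⟪y, B e⟫` and using `c₁‖e‖ ≤ ‖A e‖ + ‖B e‖` bounds `‖e‖` by
`2/c₁ · (‖h - (B†) y‖/c₁ + ε‖y‖)` for `ε ≤ 1`. Letting `ε → 0` and then choosing `(B†) y` close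
to `h` gives the claim.
-/

open RealInnerProductSpace Filter Topology ContinuousLinearMap
open scoped InnerProduct

lemma add_le_two_mul_of_sq_add_sq_le_mul {p q K : ℝ} (hK : 0 ≤ K)
    (h : p ^ 2 + q ^ 2 ≤ K * (p + q)) : p + q ≤ 2 * K := by
  nlinarith [sq_nonneg (p - q)]

lemma tendsto_nhdsGT_zero_of_le_dist_add_mul {X : Type*} [PseudoMetricSpace X] {S : Set X}
    {x : X} (hx : x ∈ closure S) {g : ℝ → ℝ} (hg : ∀ ε, 0 ≤ g ε) {K : ℝ} (hK : 0 ≤ K)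
    (hbound : ∀ s ∈ S, ∃ M, ∀ᶠ ε in 𝓝[>] 0, g ε ≤ K * dist x s + ε * M) :
    Tendsto g (𝓝[>] 0) (𝓝 0) := by
  refine tendsto_order.2 ⟨fun a ha => .of_forall fun ε => ha.trans_le (hg ε), fun a ha => ?_⟩
  obtain ⟨s, hs, hxs⟩ := Metric.mem_closure_iff.1 hx (a / (K + 1)) (by positivity)
  obtain ⟨M, hM⟩ := hbound s hs
  have hlt : K * dist x s < a := calc
    K * dist x s ≤ (K + 1) * dist x s := by nlinarith [dist_nonneg (x := x) (y := s)]
    _ < a := by rwa [lt_div_iff₀' (by positivity)] at hxs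
  have hlim : Tendsto (fun ε : ℝ => K * dist x s + ε * M) (𝓝[>] 0) (𝓝 (K * dist x s)) := by
    have hεM : Tendsto (fun ε : ℝ => ε * M) (𝓝[>] 0) (𝓝 0) :=
      ((continuous_mul_const M).tendsto' 0 0 (zero_mul M)).mono_left nhdsWithin_le_nhds
    simpa using tendsto_const_nhds.add hεM
  filter_upwards [hM, hlim.eventually (gt_mem_nhds hlt)] with ε hgε hε using hgε.trans_lt hε

lemma norm_le_of_penalized_energy_eq {H U V : Type*}
    [NormedAddCommGroup H] [InnerProductSpace ℝ H] [CompleteSpace H]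
    [NormedAddCommGroup U] [InnerProductSpace ℝ U]
    [NormedAddCommGroup V] [InnerProductSpace ℝ V] [CompleteSpace V]
    (A : H →L[ℝ] U) (B : H →L[ℝ] V) {c₁ : ℝ} (hc₁ : 0 < c₁)
    (hlow : ∀ v : H, c₁ * ‖v‖ ≤ ‖A v‖ + ‖B v‖) {ε : ℝ} (hε : 0 < ε) (hε₁ : ε ≤ 1) {e h : H}
    (henergy : ‖A e‖ ^ 2 + (ε ^ 2)⁻¹ * ‖B e‖ ^ 2 = ⟪h, e⟫) (y : V) :
    ‖e‖ ≤ 2 / c₁ * (‖h - (B†) y‖ / c₁ + ε * ‖y‖) := by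
  set p := ‖A e‖
  set q := ε⁻¹ * ‖B e‖
  have hq : 0 ≤ q := by positivity
  have hBe : ‖B e‖ = ε * q := by simp only [q, ← mul_assoc, mul_inv_cancel₀ hε.ne', one_mul]
  have hc₁e : c₁ * ‖e‖ ≤ p + q := by nlinarith [hlow e]
  have he : ‖e‖ ≤ (p + q) / c₁ := by rwa [le_div_iff₀' hc₁]
  have hsplit : ⟪h, e⟫ = ⟪h - (B†) y, e⟫ + ⟪y, B e⟫ := by
    rw [inner_sub_left, adjoint_inner_left]; ring
  have hpq : p ^ 2 + q ^ 2 ≤ (‖h - (B†) y‖ / c₁ + ε * ‖y‖) * (p + q) := calc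
    p ^ 2 + q ^ 2 = ⟪h - (B†) y, e⟫ + ⟪y, B e⟫ := by rw [← hsplit, ← henergy]; ring
    _ ≤ ‖h - (B†) y‖ * ((p + q) / c₁) + ‖y‖ * (ε * q) := by
      gcongr
      · exact (real_inner_le_norm _ _).trans (by gcongr)
      · exact (real_inner_le_norm _ _).trans_eq (by rw [hBe])
    _ = (‖h - (B†) y‖ / c₁ + ε * ‖y‖) * (p + q) - ε * ‖y‖ * p := by ring
    _ ≤ (‖h - (B†) y‖ / c₁ + ε * ‖y‖) * (p + q) := sub_le_self _ (by positivity)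
  calc ‖e‖ ≤ (p + q) / c₁ := he
    _ ≤ 2 * (‖h - (B†) y‖ / c₁ + ε * ‖y‖) / c₁ := by
      gcongr; exact add_le_two_mul_of_sq_add_sq_le_mul (by positivity) hpq
    _ = 2 / c₁ * (‖h - (B†) y‖ / c₁ + ε * ‖y‖) := by ring

theorem stmt_4_general
    {H U V : Type*}
    [NormedAddCommGroup H] [InnerProductSpace ℝ H] [CompleteSpace H]
    [NormedAddCommGroup U] [InnerProductSpace ℝ U]
    [NormedAddCommGroup V] [InnerProductSpace ℝ V] [CompleteSpace V]
    (A : H →L[ℝ] U) (B : H →L[ℝ] V)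
    (c₁ : ℝ) (hc₁ : 0 < c₁)
    (hlow : ∀ v : H, c₁ * ‖v‖ ≤ ‖A v‖ + ‖B v‖)
    (f : H →L[ℝ] ℝ)
    (u : ℝ → H)
    (hu : ∀ ε : ℝ, 0 < ε → ∀ v : H,
      ⟪A (u ε), A v⟫ + (ε ^ 2)⁻¹ * ⟪B (u ε), B v⟫ = f v)
    (u₀ : H) (hu₀ : B u₀ = 0)
    (hu₀' : ∀ v : H, B v = 0 → ⟪A u₀, A v⟫ = f v) :
    Tendsto (fun ε : ℝ => ‖u ε - u₀‖) (𝓝[>] 0) (𝓝 0) := by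
  set h := (InnerProductSpace.toDual ℝ H).symm (f - (innerSL ℝ (A u₀)).comp A)
  have hh : ∀ v, ⟪h, v⟫ = f v - ⟪A u₀, A v⟫ := by
    simp [h, inner_sub_left, InnerProductSpace.toDual_symm_apply]
  have hclosure : h ∈ closure (Set.range (B†)) := by
    have : h ∈ B.kerᗮ := fun v hv => by rw [real_inner_comm, hh, hu₀' v hv, sub_self]
    rwa [orthogonal_ker, ← SetLike.mem_coe, Submodule.topologicalClosure_coe,
      LinearMap.coe_range, coe_coe] at this
  have henergy : ∀ ε, 0 < ε →
      ‖A (u ε - u₀)‖ ^ 2 + (ε ^ 2)⁻¹ * ‖B (u ε - u₀)‖ ^ 2 = ⟪h, u ε - u₀⟫ := fun ε hε => by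
    have := hu ε hε (u ε - u₀)
    simp only [map_sub, hu₀, sub_zero, inner_sub_left, inner_sub_right,
      ← real_inner_self_eq_norm_sq, hh] at this ⊢
    linarith
  refine tendsto_nhdsGT_zero_of_le_dist_add_mul hclosure (fun _ => norm_nonneg _)
    (by positivity : 0 ≤ 2 / c₁ ^ 2) ?_
  rintro _ ⟨y, rfl⟩
  refine ⟨2 / c₁ * ‖y‖, ?_⟩
  filter_upwards [Ioc_mem_nhdsGT one_pos] with ε ⟨hε, hε₁⟩
  calc ‖u ε - u₀‖ ≤ 2 / c₁ * (‖h - (B†) y‖ / c₁ + ε * ‖y‖) :=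
        norm_le_of_penalized_energy_eq A B hc₁ hlow hε hε₁ (henergy ε hε) y
    _ = 2 / c₁ ^ 2 * dist h ((B†) y) + ε * (2 / c₁ * ‖y‖) := by rw [dist_eq_norm]; ring

/-- As ε → 0⁺, the solutions u^ε converge to u⁰ in H,
i.e. lim_{ε→0⁺} ‖u^ε − u⁰‖_H = 0. -/
theorem stmt_4
    {H U V : Type*}
    [NormedAddCommGroup H] [InnerProductSpace ℝ H] [CompleteSpace H]
    [NormedAddCommGroup U] [InnerProductSpace ℝ U] [CompleteSpace U]
    [NormedAddCommGroup V] [InnerProductSpace ℝ V] [CompleteSpace V]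
    (A : H →L[ℝ] U) (B : H →L[ℝ] V)
    (c₁ c₂ : ℝ) (hc₁ : 0 < c₁) (hc₂ : 0 < c₂)
    (hlow : ∀ v : H, c₁ * ‖v‖ ≤ ‖A v‖ + ‖B v‖)
    (hup : ∀ v : H, ‖A v‖ + ‖B v‖ ≤ c₂ * ‖v‖)
    (f : H →L[ℝ] ℝ)
    (u : ℝ → H)
    (hu : ∀ ε : ℝ, 0 < ε → ∀ v : H,
      ⟪A (u ε), A v⟫ + (ε ^ 2)⁻¹ * ⟪B (u ε), B v⟫ = f v)
    (u₀ : H) (hu₀ : B u₀ = 0)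
    (hu₀' : ∀ v : H, B v = 0 → ⟪A u₀, A v⟫ = f v) :
    Tendsto (fun ε : ℝ => ‖u ε - u₀‖) (𝓝[>] 0) (𝓝 0) :=
  stmt_4_general A B c₁ hc₁ hlow f u hu u₀ hu₀ hu₀'
end

section
/- If there exists z ∈ ker B with f(z) ≠ 0 (the bending dominated case), then u⁰ ≠ 0 and lim_{ε→0⁺} ‖u^ε‖_H = ‖u⁰‖_H ≠ 0; conversely, if f(z) = 0 for all z ∈ ker B then u⁰ = 0. -/
/-!
With `t = ε⁻²`, the element `u^ε` minimizes `‖A v‖² + t ‖B v‖² - 2 f v`, and this energy grows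
with `t`. Comparing the minimizers for `ε' ≤ ε ≤ 1` gives
`c₁² ‖u^ε - u^ε'‖² ≤ 2 (f u^ε - f u^ε')`, while `f u^ε = ‖A u^ε‖² + t ‖B u^ε‖² ≥ 0` is monotone
in `ε`. Hence `f u^ε` converges as `ε → 0⁺`, so `u^ε` is Cauchy and has a limit. Since
`‖B u^ε‖² ≤ ε² f u^ε`, the limit lies in `ker B`, where it solves the limit problem, so it is `u⁰`.
-/

open RealInnerProductSpace Filter Topology

lemma cauchy_map_of_sq_dist_le {α X : Type*} [PseudoMetricSpace X] {l : Filter α} [l.NeBot]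
    {u : α → X} {φ : α → ℝ} {L : ℝ} (hφ : Tendsto φ l (𝓝 L)) (K : ℝ)
    (h : ∀ᶠ p in l ×ˢ l, dist (u p.1) (u p.2) ^ 2 ≤ K * |φ p.1 - φ p.2|) :
    Cauchy (map u l) := by
  rw [cauchy_map_iff', tendsto_uniformity_iff_dist_tendsto_zero]
  have hφφ : Tendsto (fun p : α × α => √(K * |φ p.1 - φ p.2|)) (l ×ˢ l) (𝓝 0) := by
    simpa using (((hφ.comp tendsto_fst).sub (hφ.comp tendsto_snd)).abs.const_mul K).sqrt
  exact squeeze_zero' (.of_forall fun _ => dist_nonneg)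
    (h.mono fun _ hp => Real.le_sqrt_of_sq_le hp) hφφ

section PenaltyProblem

variable {H U V : Type*} [NormedAddCommGroup H] [InnerProductSpace ℝ H]
  [NormedAddCommGroup U] [InnerProductSpace ℝ U] [NormedAddCommGroup V] [InnerProductSpace ℝ V]
  (A : H →L[ℝ] U) (B : H →L[ℝ] V) (f : H →L[ℝ] ℝ)

/-- The paper's `u^ε` solves this problem with `t = ε⁻²`. -/
def IsPenaltySolution (t : ℝ) (w : H) : Prop :=
  ∀ v, ⟪A w, A v⟫ + t * ⟪B w, B v⟫ = f v

def IsLimitSolution (w : H) : Prop :=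
  B w = 0 ∧ ∀ v, B v = 0 → ⟪A w, A v⟫ = f v

variable {A B f} {c t t' : ℝ} {w w' : H}

lemma sq_mul_sq_norm_le_of_le_norm_add_norm (hc : 0 ≤ c) (ht : 1 ≤ t) (v : H)
    (hv : c * ‖v‖ ≤ ‖A v‖ + ‖B v‖) :
    c ^ 2 * ‖v‖ ^ 2 ≤ 2 * (‖A v‖ ^ 2 + t * ‖B v‖ ^ 2) := by
  have hcv : 0 ≤ c * ‖v‖ := by positivity
  nlinarith [sq_nonneg (‖A v‖ - ‖B v‖), mul_le_mul_of_nonneg_right ht (sq_nonneg ‖B v‖)]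

lemma eq_zero_of_map_eq_zero (hc : 0 < c) (hlow : ∀ v, c * ‖v‖ ≤ ‖A v‖ + ‖B v‖) {v : H}
    (hA : A v = 0) (hB : B v = 0) : v = 0 := by
  have hv := hlow v
  rw [hA, hB, norm_zero, norm_zero, add_zero] at hv
  exact norm_le_zero_iff.1 (nonpos_of_mul_nonpos_right hv hc)

namespace IsPenaltySolution

lemma energy_eq (hw : IsPenaltySolution A B f t w) : ‖A w‖ ^ 2 + t * ‖B w‖ ^ 2 = f w := by
  simpa only [real_inner_self_eq_norm_sq] using hw w

lemma mul_sq_norm_le (hw : IsPenaltySolution A B f t w) : t * ‖B w‖ ^ 2 ≤ f w := by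
  linarith [hw.energy_eq, sq_nonneg ‖A w‖]

lemma apply_nonneg (hw : IsPenaltySolution A B f t w) (ht : 0 ≤ t) : 0 ≤ f w := by
  rw [← hw.energy_eq]
  positivity

/-- For the energy `E_t v = ‖A v‖² + t ‖B v‖² - 2 f v`, the left side is `E_t w' - E_t w`, and
`E_t w = -f w`, `E_t w' ≤ E_t' w' = -f w'`. -/
lemma sq_norm_sub_le (hw : IsPenaltySolution A B f t w) (hw' : IsPenaltySolution A B f t' w')
    (htt' : t ≤ t') :
    ‖A (w' - w)‖ ^ 2 + t * ‖B (w' - w)‖ ^ 2 ≤ f w - f w' := by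
  have h := hw (w' - w)
  simp only [map_sub, inner_sub_right, real_inner_self_eq_norm_sq] at h ⊢
  rw [norm_sub_sq_real, norm_sub_sq_real, real_inner_comm (A w), real_inner_comm (B w)]
  nlinarith [hw.energy_eq, hw'.energy_eq, mul_le_mul_of_nonneg_right htt' (sq_nonneg ‖B w'‖)]

lemma apply_le (hw : IsPenaltySolution A B f t w) (hw' : IsPenaltySolution A B f t' w')
    (ht : 0 ≤ t) (htt' : t ≤ t') : f w' ≤ f w := by
  have := hw.sq_norm_sub_le hw' htt'
  nlinarith [sq_nonneg ‖A (w' - w)‖, sq_nonneg ‖B (w' - w)‖]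

lemma sq_norm_sub_le_of_coercive (hw : IsPenaltySolution A B f t w)
    (hw' : IsPenaltySolution A B f t' w') (hc : 0 ≤ c)
    (hlow : ∀ v, c * ‖v‖ ≤ ‖A v‖ + ‖B v‖) (ht : 1 ≤ t) (htt' : t ≤ t') :
    c ^ 2 * ‖w' - w‖ ^ 2 ≤ 2 * (f w - f w') := by
  linarith [sq_mul_sq_norm_le_of_le_norm_add_norm hc ht _ (hlow (w' - w)),
    hw.sq_norm_sub_le hw' htt']

end IsPenaltySolution

lemma IsLimitSolution.unique (hc : 0 < c) (hlow : ∀ v, c * ‖v‖ ≤ ‖A v‖ + ‖B v‖)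
    (hw : IsLimitSolution A B f w) (hw' : IsLimitSolution A B f w') : w = w' := by
  have hB : B (w - w') = 0 := by rw [map_sub, hw.1, hw'.1, sub_zero]
  have hA : ⟪A (w - w'), A (w - w')⟫ = 0 := by
    rw [map_sub A w w', inner_sub_left, ← map_sub, hw.2 _ hB, hw'.2 _ hB, sub_self]
  exact sub_eq_zero.1 (eq_zero_of_map_eq_zero hc hlow (inner_self_eq_zero.1 hA) hB)

section Convergence

variable {u : ℝ → H}

lemma exists_tendsto_apply_penaltySolution
    (hu : ∀ ε, 0 < ε → IsPenaltySolution A B f (ε ^ 2)⁻¹ (u ε)) :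
    ∃ L, Tendsto (fun ε => f (u ε)) (𝓝[>] 0) (𝓝 L) := by
  have hmono : MonotoneOn (fun ε => f (u ε)) (Set.Ioi 0) := fun ε' (hε' : 0 < ε') ε _ hε'ε =>
    (hu ε (hε'.trans_le hε'ε)).apply_le (hu ε' hε') (by positivity)
      (inv_anti₀ (by positivity) (pow_le_pow_left₀ hε'.le hε'ε 2))
  have hbdd : BddBelow ((fun ε => f (u ε)) '' Set.Ioi 0) := by
    refine ⟨0, ?_⟩
    rintro _ ⟨ε, hε, rfl⟩
    exact (hu ε hε).apply_nonneg (by positivity)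
  exact ⟨_, hmono.tendsto_nhdsGT hbdd⟩

lemma cauchy_map_penaltySolution (hc : 0 < c) (hlow : ∀ v, c * ‖v‖ ≤ ‖A v‖ + ‖B v‖)
    (hu : ∀ ε, 0 < ε → IsPenaltySolution A B f (ε ^ 2)⁻¹ (u ε)) {L : ℝ}
    (hL : Tendsto (fun ε => f (u ε)) (𝓝[>] 0) (𝓝 L)) :
    Cauchy (map u (𝓝[>] 0)) := by
  have hsq : ∀ ε ε', 0 < ε' → ε' ≤ ε → ε ≤ 1 →
      dist (u ε) (u ε') ^ 2 ≤ 2 / c ^ 2 * |f (u ε) - f (u ε')| := by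
    intro ε ε' hε' hε'ε hε1
    have hε : 0 < ε := hε'.trans_le hε'ε
    have h := (hu ε hε).sq_norm_sub_le_of_coercive (hu ε' hε') hc.le hlow
      (one_le_inv₀ (by positivity) |>.2 (pow_le_one₀ hε.le hε1))
      (inv_anti₀ (by positivity) (pow_le_pow_left₀ hε'.le hε'ε 2))
    rw [dist_comm, dist_eq_norm, div_mul_eq_mul_div, le_div_iff₀ (by positivity)]
    nlinarith [le_abs_self (f (u ε) - f (u ε'))]
  refine cauchy_map_of_sq_dist_le hL (2 / c ^ 2) ?_
  have hIoc : Set.Ioc (0 : ℝ) 1 ∈ 𝓝[>] 0 := Ioc_mem_nhdsGT one_pos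
  filter_upwards [prod_mem_prod hIoc hIoc] with ⟨ε, ε'⟩ ⟨⟨hε, hε1⟩, hε', hε'1⟩
  rcases le_total ε' ε with hε'ε | hεε'
  · exact hsq ε ε' hε' hε'ε hε1
  · rw [dist_comm, abs_sub_comm]
    exact hsq ε' ε hε hεε' hε'1

lemma isLimitSolution_of_tendsto
    (hu : ∀ ε, 0 < ε → IsPenaltySolution A B f (ε ^ 2)⁻¹ (u ε)) {L : ℝ}
    (hL : Tendsto (fun ε => f (u ε)) (𝓝[>] 0) (𝓝 L)) {u' : H}
    (hu' : Tendsto u (𝓝[>] 0) (𝓝 u')) : IsLimitSolution A B f u' := by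
  have hBu' : ‖B u'‖ ^ 2 ≤ 0 ^ 2 * L := by
    refine le_of_tendsto_of_tendsto (((B.continuous.tendsto u').comp hu').norm.pow 2)
      (((continuous_pow 2).tendsto 0 |>.mono_left nhdsWithin_le_nhds).mul hL) ?_
    filter_upwards [self_mem_nhdsWithin] with ε (hε : 0 < ε)
    have h := (hu ε hε).mul_sq_norm_le
    rwa [inv_mul_le_iff₀ (by positivity)] at h
  rw [zero_pow two_ne_zero, zero_mul] at hBu'
  refine ⟨norm_eq_zero.1 (pow_eq_zero_iff two_ne_zero |>.1 (le_antisymm hBu' (sq_nonneg _))),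
    fun v hv => tendsto_nhds_unique (((A.continuous.tendsto u').comp hu').inner tendsto_const_nhds)
      (tendsto_const_nhds.congr' ?_)⟩
  filter_upwards [self_mem_nhdsWithin] with ε (hε : 0 < ε)
  simpa only [Function.comp_apply, hv, inner_zero_right, mul_zero, add_zero]
    using (hu ε hε v).symm

theorem tendsto_nhdsGT_penaltySolution [CompleteSpace H] (hc : 0 < c)
    (hlow : ∀ v, c * ‖v‖ ≤ ‖A v‖ + ‖B v‖)
    (hu : ∀ ε, 0 < ε → IsPenaltySolution A B f (ε ^ 2)⁻¹ (u ε)) {u₀ : H}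
    (hu₀ : IsLimitSolution A B f u₀) : Tendsto u (𝓝[>] 0) (𝓝 u₀) := by
  obtain ⟨L, hL⟩ := exists_tendsto_apply_penaltySolution hu
  obtain ⟨u', hu'⟩ := cauchy_map_iff_exists_tendsto.1 (cauchy_map_penaltySolution hc hlow hu hL)
  rwa [(isLimitSolution_of_tendsto hu hL hu').unique hc hlow hu₀] at hu'

end Convergence

end PenaltyProblem

theorem stmt_5_general
    {H U V : Type*}
    [NormedAddCommGroup H] [InnerProductSpace ℝ H] [CompleteSpace H]
    [NormedAddCommGroup U] [InnerProductSpace ℝ U]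
    [NormedAddCommGroup V] [InnerProductSpace ℝ V]
    (A : H →L[ℝ] U) (B : H →L[ℝ] V)
    (c₁ : ℝ) (hc₁ : 0 < c₁)
    (hlow : ∀ v : H, c₁ * ‖v‖ ≤ ‖A v‖ + ‖B v‖)
    (f : H →L[ℝ] ℝ)
    (u : ℝ → H)
    (hu : ∀ ε : ℝ, 0 < ε → ∀ v : H,
      ⟪A (u ε), A v⟫ + (ε ^ 2)⁻¹ * ⟪B (u ε), B v⟫ = f v)
    (u₀ : H) (hu₀ : B u₀ = 0)
    (hu₀' : ∀ v : H, B v = 0 → ⟪A u₀, A v⟫ = f v) :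
    ((∃ z : H, B z = 0 ∧ f z ≠ 0) →
      u₀ ≠ 0 ∧ Tendsto (fun ε : ℝ => ‖u ε‖) (𝓝[>] 0) (𝓝 ‖u₀‖) ∧ ‖u₀‖ ≠ 0) ∧
    ((∀ z : H, B z = 0 → f z = 0) → u₀ = 0) := by
  have hlim : IsLimitSolution A B f u₀ := ⟨hu₀, hu₀'⟩
  refine ⟨fun ⟨z, hz, hfz⟩ => ?_, fun hf => ?_⟩
  · have hne : u₀ ≠ 0 := by
      rintro rfl
      exact hfz (by simpa using (hu₀' z hz).symm)
    exact ⟨hne, (tendsto_nhdsGT_penaltySolution hc₁ hlow hu hlim).norm, norm_ne_zero_iff.2 hne⟩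
  · refine hlim.unique hc₁ hlow ⟨map_zero B, fun v hv => ?_⟩
    rw [map_zero, inner_zero_left, hf v hv]

/-- If there exists z ∈ ker B with f(z) ≠ 0 (the bending dominated case), then u⁰ ≠ 0 and
lim_{ε→0⁺} ‖u^ε‖_H = ‖u⁰‖_H ≠ 0; conversely, if f(z) = 0 for all z ∈ ker B then u⁰ = 0. -/
theorem stmt_5
    {H U V : Type*}
    [NormedAddCommGroup H] [InnerProductSpace ℝ H] [CompleteSpace H]
    [NormedAddCommGroup U] [InnerProductSpace ℝ U] [CompleteSpace U]
    [NormedAddCommGroup V] [InnerProductSpace ℝ V] [CompleteSpace V]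
    (A : H →L[ℝ] U) (B : H →L[ℝ] V)
    (c₁ c₂ : ℝ) (hc₁ : 0 < c₁) (hc₂ : 0 < c₂)
    (hlow : ∀ v : H, c₁ * ‖v‖ ≤ ‖A v‖ + ‖B v‖)
    (hup : ∀ v : H, ‖A v‖ + ‖B v‖ ≤ c₂ * ‖v‖)
    (f : H →L[ℝ] ℝ)
    (u : ℝ → H)
    (hu : ∀ ε : ℝ, 0 < ε → ∀ v : H,
      ⟪A (u ε), A v⟫ + (ε ^ 2)⁻¹ * ⟪B (u ε), B v⟫ = f v)
    (u₀ : H) (hu₀ : B u₀ = 0)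
    (hu₀' : ∀ v : H, B v = 0 → ⟪A u₀, A v⟫ = f v) :
    ((∃ z : H, B z = 0 ∧ f z ≠ 0) →
      u₀ ≠ 0 ∧ Tendsto (fun ε : ℝ => ‖u ε‖) (𝓝[>] 0) (𝓝 ‖u₀‖) ∧ ‖u₀‖ ≠ 0) ∧
    ((∀ z : H, B z = 0 → f z = 0) → u₀ = 0) :=
  stmt_5_general A B c₁ hc₁ hlow f u hu u₀ hu₀ hu₀'
end

section
/- If there exists z ∈ ker B with f(z) ≠ 0 (the bending dominated case), then the ratio of the membrane/shear energy to the bending energy tends to zero: lim_{ε→0⁺} ⟨B u^ε, B u^ε⟩_V / (ε² ⟨A u^ε, A u^ε⟩_U) = 0. -/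
/-!
The solution `u^ε` minimises the penalised energy
`E_ε(v) = ½‖A v‖² + ½ ε⁻² ‖B v‖² - f v`, and `ε ↦ E_ε(u^ε)` increases as `ε ↓ 0` while staying
below `E_ε(0) = 0`, so it converges. Comparing `E_{2ε}` with `E_ε` at `u^ε` bounds the penalty term
`ε⁻² ‖B u^ε‖²` by a multiple of `E_ε(u^ε) - E_{2ε}(u^{2ε})`, which therefore tends to `0`. In the
bending dominated case, testing with `z ∈ ker B` gives `f z = ⟪A u^ε, A z⟫`, so `‖A u^ε‖` stays
bounded away from `0`, and the ratio tends to `0`.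
-/

open RealInnerProductSpace Filter Topology Set

lemma AntitoneOn.tendsto_sub_comp_const_mul_nhdsGT_zero {g : ℝ → ℝ} (hg : AntitoneOn g (Ioi 0))
    (hbdd : BddAbove (g '' Ioi 0)) {c : ℝ} (hc : 0 < c) :
    Tendsto (fun ε => g ε - g (c * ε)) (𝓝[>] 0) (𝓝 0) := by
  have hlim := hg.tendsto_nhdsGT hbdd
  have hscale : Tendsto (c * ·) (𝓝[>] (0 : ℝ)) (𝓝[>] 0) :=
    tendsto_iff_comap.2 (comap_mulLeft_nhdsGT_zero hc).ge
  simpa using hlim.sub (hlim.comp hscale)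

section PenaltyEnergy

variable {H U V : Type*} [AddCommGroup H] [Module ℝ H]
  [NormedAddCommGroup U] [InnerProductSpace ℝ U] [NormedAddCommGroup V] [InnerProductSpace ℝ V]
  (A : H →ₗ[ℝ] U) (B : H →ₗ[ℝ] V) (f : H →ₗ[ℝ] ℝ)

noncomputable def penaltyEnergy (t : ℝ) (v : H) : ℝ := (‖A v‖ ^ 2 + t * ‖B v‖ ^ 2) / 2 - f v

variable {A B f}

lemma penaltyEnergy_eq_add (s t : ℝ) (v : H) :
    penaltyEnergy A B f s v = penaltyEnergy A B f t v + (s - t) * ‖B v‖ ^ 2 / 2 := by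
  unfold penaltyEnergy; ring

lemma penaltyEnergy_mono {s t : ℝ} (hst : s ≤ t) (v : H) :
    penaltyEnergy A B f s v ≤ penaltyEnergy A B f t v := by
  unfold penaltyEnergy
  gcongr

lemma penaltyEnergy_eq_add_of_forall_inner {t : ℝ} {w : H}
    (hw : ∀ v, ⟪A w, A v⟫ + t * ⟪B w, B v⟫ = f v) (v : H) :
    penaltyEnergy A B f t v =
      penaltyEnergy A B f t w + (‖A (v - w)‖ ^ 2 + t * ‖B (v - w)‖ ^ 2) / 2 := by
  have hvw := hw (v - w)
  simp only [map_sub, inner_sub_right, real_inner_self_eq_norm_sq] at hvw ⊢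
  rw [norm_sub_sq_real, norm_sub_sq_real, real_inner_comm (A w), real_inner_comm (B w)]
  unfold penaltyEnergy
  linear_combination hvw

lemma penaltyEnergy_le_of_forall_inner {t : ℝ} (ht : 0 ≤ t) {w : H}
    (hw : ∀ v, ⟪A w, A v⟫ + t * ⟪B w, B v⟫ = f v) (v : H) :
    penaltyEnergy A B f t w ≤ penaltyEnergy A B f t v := by
  rw [penaltyEnergy_eq_add_of_forall_inner hw v]
  have : 0 ≤ ‖A (v - w)‖ ^ 2 + t * ‖B (v - w)‖ ^ 2 := by positivity
  linarith

variable {u : ℝ → H}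
  (hu : ∀ ε : ℝ, 0 < ε → ∀ v : H, ⟪A (u ε), A v⟫ + (ε ^ 2)⁻¹ * ⟪B (u ε), B v⟫ = f v)
include hu

lemma antitoneOn_penaltyEnergy_solution :
    AntitoneOn (fun ε => penaltyEnergy A B f (ε ^ 2)⁻¹ (u ε)) (Ioi 0) := by
  intro δ (hδ : 0 < δ) ε (hε : 0 < ε) hδε
  calc penaltyEnergy A B f (ε ^ 2)⁻¹ (u ε)
      ≤ penaltyEnergy A B f (ε ^ 2)⁻¹ (u δ) :=
        penaltyEnergy_le_of_forall_inner (by positivity) (hu ε hε) _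
    _ ≤ penaltyEnergy A B f (δ ^ 2)⁻¹ (u δ) := by
        refine penaltyEnergy_mono (inv_anti₀ (by positivity) ?_) _
        gcongr

lemma penaltyEnergy_solution_nonpos {ε : ℝ} (hε : 0 < ε) :
    penaltyEnergy A B f (ε ^ 2)⁻¹ (u ε) ≤ 0 := by
  simpa [penaltyEnergy] using penaltyEnergy_le_of_forall_inner (by positivity) (hu ε hε) 0

-- Minimality of `u^{2ε}`, tested against `u^ε`: the penalty drops from `ε⁻²` to `ε⁻²/4`.
lemma penalty_mul_norm_sq_le {ε : ℝ} (hε : 0 < ε) :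
    (ε ^ 2)⁻¹ * ‖B (u ε)‖ ^ 2 ≤
      8 / 3 * (penaltyEnergy A B f (ε ^ 2)⁻¹ (u ε) -
        penaltyEnergy A B f ((2 * ε) ^ 2)⁻¹ (u (2 * ε))) := by
  have hmin := penaltyEnergy_le_of_forall_inner (by positivity) (hu (2 * ε) (by positivity)) (u ε)
  rw [penaltyEnergy_eq_add _ (ε ^ 2)⁻¹ (u ε)] at hmin
  have hpen : ((2 * ε) ^ 2)⁻¹ - (ε ^ 2)⁻¹ = -(3 / 4 * (ε ^ 2)⁻¹) := by
    field_simp; ring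
  rw [hpen] at hmin
  linarith

theorem tendsto_penalty_mul_norm_sq :
    Tendsto (fun ε => (ε ^ 2)⁻¹ * ‖B (u ε)‖ ^ 2) (𝓝[>] 0) (𝓝 0) := by
  have hbdd : BddAbove ((fun ε => penaltyEnergy A B f (ε ^ 2)⁻¹ (u ε)) '' Ioi 0) := by
    refine ⟨0, ?_⟩
    rintro _ ⟨ε, hε, rfl⟩
    exact penaltyEnergy_solution_nonpos hu hε
  have hdiff := ((antitoneOn_penaltyEnergy_solution hu).tendsto_sub_comp_const_mul_nhdsGT_zero
    hbdd two_pos).const_mul (8 / 3)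
  rw [mul_zero] at hdiff
  refine tendsto_of_tendsto_of_tendsto_of_le_of_le' tendsto_const_nhds hdiff ?_ ?_
  · exact Eventually.of_forall fun ε => by positivity
  · filter_upwards [self_mem_nhdsWithin] with ε hε
    exact penalty_mul_norm_sq_le hu hε

lemma abs_apply_le_norm_mul_norm_of_map_eq_zero {ε : ℝ} (hε : 0 < ε) {z : H} (hz : B z = 0) :
    |f z| ≤ ‖A (u ε)‖ * ‖A z‖ := by
  have h := hu ε hε z
  rw [hz, inner_zero_right, mul_zero, add_zero] at h
  exact h ▸ abs_real_inner_le_norm _ _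

end PenaltyEnergy

theorem stmt_6_general
    {H U V : Type*}
    [NormedAddCommGroup H] [InnerProductSpace ℝ H]
    [NormedAddCommGroup U] [InnerProductSpace ℝ U]
    [NormedAddCommGroup V] [InnerProductSpace ℝ V]
    (A : H →L[ℝ] U) (B : H →L[ℝ] V)
    (f : H →L[ℝ] ℝ)
    (u : ℝ → H)
    (hu : ∀ ε : ℝ, 0 < ε → ∀ v : H,
      ⟪A (u ε), A v⟫ + (ε ^ 2)⁻¹ * ⟪B (u ε), B v⟫ = f v)
    (hbend : ∃ z : H, B z = 0 ∧ f z ≠ 0) :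
    Tendsto (fun ε : ℝ => ⟪B (u ε), B (u ε)⟫ / (ε ^ 2 * ⟪A (u ε), A (u ε)⟫))
      (𝓝[>] 0) (𝓝 0) := by
  obtain ⟨z, hBz, hfz⟩ := hbend
  have hfA : ∀ ε, 0 < ε → |f z| ≤ ‖A (u ε)‖ * ‖A z‖ := fun ε hε =>
    abs_apply_le_norm_mul_norm_of_map_eq_zero (A := (A : H →ₗ[ℝ] U)) (B := (B : H →ₗ[ℝ] V))
      (f := (f : H →ₗ[ℝ] ℝ)) hu hε hBz
  have hAz : 0 < ‖A z‖ :=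
    (norm_nonneg _).lt_of_ne' fun h => hfz (by simpa [h] using hfA 1 one_pos)
  set c := |f z| / ‖A z‖
  have hc : 0 < c := div_pos (abs_pos.2 hfz) hAz
  have hAu : ∀ ε, 0 < ε → c ≤ ‖A (u ε)‖ := fun ε hε => (div_le_iff₀ hAz).2 (hfA ε hε)
  have hpen := (tendsto_penalty_mul_norm_sq (A := (A : H →ₗ[ℝ] U)) (B := (B : H →ₗ[ℝ] V))
    (f := (f : H →ₗ[ℝ] ℝ)) hu).div_const (c ^ 2)
  rw [zero_div] at hpen
  refine tendsto_of_tendsto_of_tendsto_of_le_of_le' tendsto_const_nhds hpen ?_ ?_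
  · exact Eventually.of_forall fun ε =>
      div_nonneg real_inner_self_nonneg (mul_nonneg (sq_nonneg ε) real_inner_self_nonneg)
  · filter_upwards [self_mem_nhdsWithin] with ε (hε : 0 < ε)
    calc ⟪B (u ε), B (u ε)⟫ / (ε ^ 2 * ⟪A (u ε), A (u ε)⟫)
        = (ε ^ 2)⁻¹ * ‖B (u ε)‖ ^ 2 / ‖A (u ε)‖ ^ 2 := by
          rw [real_inner_self_eq_norm_sq, real_inner_self_eq_norm_sq]; ring
      _ ≤ (ε ^ 2)⁻¹ * ‖B (u ε)‖ ^ 2 / c ^ 2 := by gcongr; exact hAu ε hε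

/-- If there exists z ∈ ker B with f(z) ≠ 0 (the bending dominated case), then the ratio
of the membrane/shear energy to the bending energy tends to zero:
lim_{ε→0⁺} ⟨B u^ε, B u^ε⟩_V / (ε² ⟨A u^ε, A u^ε⟩_U) = 0. -/
theorem stmt_6
    {H U V : Type*}
    [NormedAddCommGroup H] [InnerProductSpace ℝ H] [CompleteSpace H]
    [NormedAddCommGroup U] [InnerProductSpace ℝ U] [CompleteSpace U]
    [NormedAddCommGroup V] [InnerProductSpace ℝ V] [CompleteSpace V]
    (A : H →L[ℝ] U) (B : H →L[ℝ] V)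
    (c₁ c₂ : ℝ) (hc₁ : 0 < c₁) (hc₂ : 0 < c₂)
    (hlow : ∀ v : H, c₁ * ‖v‖ ≤ ‖A v‖ + ‖B v‖)
    (hup : ∀ v : H, ‖A v‖ + ‖B v‖ ≤ c₂ * ‖v‖)
    (f : H →L[ℝ] ℝ)
    (u : ℝ → H)
    (hu : ∀ ε : ℝ, 0 < ε → ∀ v : H,
      ⟪A (u ε), A v⟫ + (ε ^ 2)⁻¹ * ⟪B (u ε), B v⟫ = f v)
    (hbend : ∃ z : H, B z = 0 ∧ f z ≠ 0) :
    Tendsto (fun ε : ℝ => ⟪B (u ε), B (u ε)⟫ / (ε ^ 2 * ⟪A (u ε), A (u ε)⟫))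
      (𝓝[>] 0) (𝓝 0) :=
  stmt_6_general A B f u hu hbend
end

section
/- If f(z) = 0 for all z ∈ ker B (the non-bending-dominated case), then the solutions tend to zero: lim_{ε→0⁺} ‖u^ε‖_H = 0. -/
/-!
Testing the equation with `v = u ε` gives the energy identity
`‖A u‖² + ε⁻² ‖B u‖² = f u`. For `ε ≤ 1` the left side dominates `c₁² ‖u‖² / 2`, so the
solutions are bounded, and then `‖B u‖² ≤ ε² f u = O(ε²)`. Since `f` vanishes on `ker B`, its
Riesz representative lies in `(ker B)ᗮ`, the closure of the range of `B†`; pairing a bounded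
family with `B† g` gives `⟪g, B u⟫ → 0`, and by density `f u → 0`. The energy identity then
forces `‖u‖ → 0`.
-/

open RealInnerProductSpace Filter Topology

theorem sq_le_two_mul_sq_add_mul_sq {x a b t : ℝ} (hx : 0 ≤ x) (h : x ≤ a + b) (ht : 1 ≤ t) :
    x ^ 2 ≤ 2 * (a ^ 2 + t * b ^ 2) := by
  nlinarith [sq_nonneg (a - b), sq_nonneg b]

theorem le_div_sq_of_mul_sq_le_mul {c x K : ℝ} (hc : 0 < c) (hx : 0 ≤ x) (hK : 0 ≤ K)
    (h : (c * x) ^ 2 ≤ K * x) : x ≤ K / c ^ 2 := by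
  rw [le_div_iff₀ (by positivity)]
  rcases hx.eq_or_lt with rfl | hx
  · simpa using hK
  · nlinarith

section

variable {ι : Type*} {l : Filter ι}

theorem tendsto_zero_of_norm_sq_le {E : Type*} [SeminormedAddCommGroup E] {x : ι → E}
    {g : ι → ℝ} (h : ∀ᶠ i in l, ‖x i‖ ^ 2 ≤ g i) (hg : Tendsto g l (𝓝 0)) :
    Tendsto x l (𝓝 0) := by
  rw [tendsto_zero_iff_norm_tendsto_zero]
  refine squeeze_zero' (.of_forall fun _ ↦ norm_nonneg _) ?_ (by simpa using hg.sqrt)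
  filter_upwards [h] with i hi
  simpa using Real.abs_le_sqrt hi

variable {H : Type*} [NormedAddCommGroup H] [InnerProductSpace ℝ H] {u : ι → H} {M : ℝ}

theorem tendsto_inner_zero_of_mem_closure {S : Set H} {w : H} (hw : w ∈ closure S)
    (hu : ∀ᶠ i in l, ‖u i‖ ≤ M) (hS : ∀ y ∈ S, Tendsto (fun i ↦ ⟪y, u i⟫) l (𝓝 0)) :
    Tendsto (fun i ↦ ⟪w, u i⟫) l (𝓝 0) := by
  rw [Metric.tendsto_nhds]
  intro δ hδ
  obtain ⟨y, hyS, hwy⟩ := Metric.mem_closure_iff.1 hw (δ / 2 / (|M| + 1)) (by positivity)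
  filter_upwards [hu, Metric.tendsto_nhds.1 (hS y hyS) (δ / 2) (half_pos hδ)] with i hui hyi
  rw [Real.dist_eq, sub_zero] at hyi ⊢
  rw [dist_eq_norm, lt_div_iff₀ (by positivity)] at hwy
  have hwy_u : ‖w - y‖ * ‖u i‖ < δ / 2 :=
    (mul_le_mul_of_nonneg_left (hui.trans ((le_abs_self M).trans (by linarith)))
      (norm_nonneg _)).trans_lt hwy
  calc |⟪w, u i⟫| = |⟪w - y, u i⟫ + ⟪y, u i⟫| := by rw [← inner_add_left, sub_add_cancel]
    _ ≤ ‖w - y‖ * ‖u i‖ + |⟪y, u i⟫| :=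
      (abs_add_le _ _).trans (add_le_add_left (abs_real_inner_le_norm _ _) _)
    _ < δ := by linarith

variable [CompleteSpace H] {V : Type*} [NormedAddCommGroup V] [InnerProductSpace ℝ V]
  [CompleteSpace V]

theorem tendsto_inner_zero_of_mem_orthogonal_ker (B : H →L[ℝ] V) {w : H}
    (hw : w ∈ (B : H →ₗ[ℝ] V).kerᗮ) (hu : ∀ᶠ i in l, ‖u i‖ ≤ M)
    (hBu : Tendsto (fun i ↦ B (u i)) l (𝓝 0)) :
    Tendsto (fun i ↦ ⟪w, u i⟫) l (𝓝 0) := by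
  rw [B.orthogonal_ker, ← SetLike.mem_coe, Submodule.topologicalClosure_coe] at hw
  refine tendsto_inner_zero_of_mem_closure hw hu ?_
  rintro _ ⟨g, rfl⟩
  simpa [ContinuousLinearMap.adjoint_inner_left] using (tendsto_const_nhds (x := g)).inner hBu

end

theorem toDual_symm_mem_orthogonal_ker {H V : Type*} [NormedAddCommGroup H]
    [InnerProductSpace ℝ H] [CompleteSpace H] [AddCommGroup V] [Module ℝ V]
    (B : H →ₗ[ℝ] V) (f : H →L[ℝ] ℝ) (hf : ∀ z : H, B z = 0 → f z = 0) :
    (InnerProductSpace.toDual ℝ H).symm f ∈ (LinearMap.ker B)ᗮ := by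
  rw [Submodule.mem_orthogonal']
  intro z hz
  rw [InnerProductSpace.toDual_symm_apply]
  exact hf z hz

section

variable {H U V : Type*} [NormedAddCommGroup H] [InnerProductSpace ℝ H]
  [NormedAddCommGroup U] [InnerProductSpace ℝ U] [NormedAddCommGroup V] [InnerProductSpace ℝ V]
  {A : H →L[ℝ] U} {B : H →L[ℝ] V} {f : H →L[ℝ] ℝ} {x : H} {ε : ℝ}

theorem energy_eq (hx : ∀ v : H, ⟪A x, A v⟫ + (ε ^ 2)⁻¹ * ⟪B x, B v⟫ = f v) :
    ‖A x‖ ^ 2 + (ε ^ 2)⁻¹ * ‖B x‖ ^ 2 = f x := by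
  simpa only [real_inner_self_eq_norm_sq] using hx x

theorem sq_norm_apply_le_sq_mul (hx : ∀ v : H, ⟪A x, A v⟫ + (ε ^ 2)⁻¹ * ⟪B x, B v⟫ = f v)
    (hε : ε ≠ 0) : ‖B x‖ ^ 2 ≤ ε ^ 2 * f x :=
  (inv_mul_le_iff₀ (by positivity)).1 (by nlinarith [energy_eq hx, sq_nonneg ‖A x‖])

theorem sq_mul_norm_le_two_mul {c₁ : ℝ} (hc₁ : 0 ≤ c₁) (hlow : c₁ * ‖x‖ ≤ ‖A x‖ + ‖B x‖)
    (hx : ∀ v : H, ⟪A x, A v⟫ + (ε ^ 2)⁻¹ * ⟪B x, B v⟫ = f v) (hε : 0 < ε) (hε1 : ε ≤ 1) :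
    (c₁ * ‖x‖) ^ 2 ≤ 2 * f x := by
  rw [← energy_eq hx]
  exact sq_le_two_mul_sq_add_mul_sq (by positivity) hlow
    ((one_le_inv₀ (by positivity)).2 (pow_le_one₀ hε.le hε1))

end

theorem stmt_7_general
    {H U V : Type*}
    [NormedAddCommGroup H] [InnerProductSpace ℝ H] [CompleteSpace H]
    [NormedAddCommGroup U] [InnerProductSpace ℝ U]
    [NormedAddCommGroup V] [InnerProductSpace ℝ V] [CompleteSpace V]
    (A : H →L[ℝ] U) (B : H →L[ℝ] V)
    (c₁ : ℝ) (hc₁ : 0 < c₁)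
    (hlow : ∀ v : H, c₁ * ‖v‖ ≤ ‖A v‖ + ‖B v‖)
    (f : H →L[ℝ] ℝ)
    (u : ℝ → H)
    (hu : ∀ ε : ℝ, 0 < ε → ∀ v : H,
      ⟪A (u ε), A v⟫ + (ε ^ 2)⁻¹ * ⟪B (u ε), B v⟫ = f v)
    (hf : ∀ z : H, B z = 0 → f z = 0) :
    Tendsto (fun ε : ℝ => ‖u ε‖) (𝓝[>] 0) (𝓝 0) := by
  have hsmall : ∀ᶠ ε in 𝓝[>] (0 : ℝ), 0 < ε ∧ ε ≤ 1 := Ioc_mem_nhdsGT one_pos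
  have hcoercive : ∀ᶠ ε in 𝓝[>] 0, (c₁ * ‖u ε‖) ^ 2 ≤ 2 * f (u ε) := by
    filter_upwards [hsmall] with ε ⟨hε, hε1⟩
    exact sq_mul_norm_le_two_mul hc₁.le (hlow _) (hu ε hε) hε hε1
  have hf_le (ε : ℝ) : f (u ε) ≤ ‖f‖ * ‖u ε‖ := (Real.le_norm_self _).trans (f.le_opNorm _)
  set M := 2 * ‖f‖ / c₁ ^ 2
  have hbounded : ∀ᶠ ε in 𝓝[>] 0, ‖u ε‖ ≤ M := by
    filter_upwards [hcoercive] with ε h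
    exact le_div_sq_of_mul_sq_le_mul hc₁ (norm_nonneg _) (by positivity) (by nlinarith [hf_le ε])
  have hBu : Tendsto (fun ε ↦ B (u ε)) (𝓝[>] 0) (𝓝 0) := by
    refine tendsto_zero_of_norm_sq_le (g := fun ε ↦ ε ^ 2 * (‖f‖ * M)) ?_ ?_
    · filter_upwards [hsmall, hbounded] with ε ⟨hε, _⟩ hb
      refine (sq_norm_apply_le_sq_mul (hu ε hε) hε.ne').trans (mul_le_mul_of_nonneg_left ?_ (sq_nonneg ε))
      exact (hf_le ε).trans (mul_le_mul_of_nonneg_left hb (norm_nonneg f))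
    · exact tendsto_nhdsWithin_of_tendsto_nhds (Continuous.tendsto' (by fun_prop) 0 0 (by simp))
  have hfu : Tendsto (fun ε ↦ f (u ε)) (𝓝[>] 0) (𝓝 0) := by
    simpa [InnerProductSpace.toDual_symm_apply] using tendsto_inner_zero_of_mem_orthogonal_ker B
      (toDual_symm_mem_orthogonal_ker (B : H →ₗ[ℝ] V) f hf) hbounded hBu
  suffices Tendsto u (𝓝[>] 0) (𝓝 0) by simpa using this.norm
  refine tendsto_zero_of_norm_sq_le (g := fun ε ↦ 2 * f (u ε) / c₁ ^ 2) ?_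
    (by simpa using (hfu.const_mul 2).div_const (c₁ ^ 2))
  filter_upwards [hcoercive] with ε h
  rw [le_div_iff₀ (by positivity)]
  linarith

/-- If f(z) = 0 for all z ∈ ker B (the non-bending-dominated case), then the solutions
tend to zero: lim_{ε→0⁺} ‖u^ε‖_H = 0. -/
theorem stmt_7
    {H U V : Type*}
    [NormedAddCommGroup H] [InnerProductSpace ℝ H] [CompleteSpace H]
    [NormedAddCommGroup U] [InnerProductSpace ℝ U] [CompleteSpace U]
    [NormedAddCommGroup V] [InnerProductSpace ℝ V] [CompleteSpace V]
    (A : H →L[ℝ] U) (B : H →L[ℝ] V)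
    (c₁ c₂ : ℝ) (hc₁ : 0 < c₁) (hc₂ : 0 < c₂)
    (hlow : ∀ v : H, c₁ * ‖v‖ ≤ ‖A v‖ + ‖B v‖)
    (hup : ∀ v : H, ‖A v‖ + ‖B v‖ ≤ c₂ * ‖v‖)
    (f : H →L[ℝ] ℝ)
    (u : ℝ → H)
    (hu : ∀ ε : ℝ, 0 < ε → ∀ v : H,
      ⟪A (u ε), A v⟫ + (ε ^ 2)⁻¹ * ⟪B (u ε), B v⟫ = f v)
    (hf : ∀ z : H, B z = 0 → f z = 0) :
    Tendsto (fun ε : ℝ => ‖u ε‖) (𝓝[>] 0) (𝓝 0) :=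
  stmt_7_general A B c₁ hc₁ hlow f u hu hf
end

section
/- If there exists a continuous linear functional g on V with f(v) = g(B v) for all v ∈ H (the membrane/shear dominated case), then ‖u^ε‖_H = o(ε), i.e. lim_{ε→0⁺} ε⁻¹ ‖u^ε‖_H = 0. -/
open RealInnerProductSpace Filter Topology

/-! The data `g ∘ B` are represented as `⟪h, B ·⟫` with `h` in the closure of the range of `B`.
Rescaled by `ε²`, the variational equation says that `u^ε` minimises
`‖A w‖² + ε⁻² ‖B w - ε² h‖²`. Comparing with `w = ε² ψ` gives `‖A u^ε‖ ≤ ε (ε ‖A ψ‖ + ‖B ψ - h‖)`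
for every `ψ`, and comparing with `w = 0` gives `‖B u^ε‖ ≤ 2 ε² ‖h‖`. Since `‖B ψ - h‖` can be
made arbitrarily small, the coercivity bound `c₁ ‖u^ε‖ ≤ ‖A u^ε‖ + ‖B u^ε‖` yields
`‖u^ε‖ = o(ε)`. -/

theorem Submodule.exists_mem_topologicalClosure_forall_inner_eq
    {V : Type*} [NormedAddCommGroup V] [InnerProductSpace ℝ V] [CompleteSpace V]
    (K : Submodule ℝ V) (g : V →L[ℝ] ℝ) :
    ∃ h ∈ K.topologicalClosure, ∀ x ∈ K.topologicalClosure, g x = ⟪h, x⟫ := by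
  set gK := g.comp K.topologicalClosure.subtypeL
  set h := (InnerProductSpace.toDual ℝ K.topologicalClosure).symm gK
  exact ⟨h, h.2, fun x hx =>
    (InnerProductSpace.toDual_symm_apply (x := (⟨x, hx⟩ : K.topologicalClosure)) (y := gK)).symm⟩

section PenalizedLeastSquares

variable {H U V : Type*}
  [NormedAddCommGroup H] [InnerProductSpace ℝ H]
  [NormedAddCommGroup U] [InnerProductSpace ℝ U]
  [NormedAddCommGroup V] [InnerProductSpace ℝ V]
  (A : H →ₗ[ℝ] U) (B : H →ₗ[ℝ] V)

theorem norm_sq_add_mul_norm_sub_sq_le_of_inner_eq {s : ℝ} (hs : 0 ≤ s) {y : V} {u : H}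
    (hu : ∀ v, ⟪A u, A v⟫ + s * ⟪B u, B v⟫ = s * ⟪y, B v⟫) (φ : H) :
    ‖A u‖ ^ 2 + s * ‖B u - y‖ ^ 2 ≤ ‖A φ‖ ^ 2 + s * ‖B φ - y‖ ^ 2 := by
  set d := φ - u
  have hAφ : A φ = A u + A d := by rw [← map_add, add_sub_cancel]
  have hBφ : B φ - y = (B u - y) + B d := by rw [map_sub]; abel
  have hcross : ⟪A u, A d⟫ + s * ⟪B u - y, B d⟫ = 0 := by
    rw [inner_sub_left]; linarith [hu d]
  rw [hAφ, hBφ, norm_add_sq_real, norm_add_sq_real (B u - y)]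
  nlinarith [sq_nonneg ‖A d‖, mul_nonneg hs (sq_nonneg ‖B d‖)]

def IsPenalizedSolution (ε : ℝ) (h : V) (u : H) : Prop :=
  ∀ v, ⟪A u, A v⟫ + (ε ^ 2)⁻¹ * ⟪B u, B v⟫ = ⟪h, B v⟫

namespace IsPenalizedSolution

variable {A B} {ε : ℝ} {h : V} {u : H}

theorem energy_le (hu : IsPenalizedSolution A B ε h u) (hε : 0 < ε) (φ : H) :
    ‖A u‖ ^ 2 + (ε ^ 2)⁻¹ * ‖B u - ε ^ 2 • h‖ ^ 2
      ≤ ‖A φ‖ ^ 2 + (ε ^ 2)⁻¹ * ‖B φ - ε ^ 2 • h‖ ^ 2 := by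
  refine norm_sq_add_mul_norm_sub_sq_le_of_inner_eq A B (by positivity) (fun v => ?_) φ
  rw [real_inner_smul_left, ← mul_assoc, inv_mul_cancel₀ (by positivity), one_mul]
  exact hu v

theorem norm_le (hu : IsPenalizedSolution A B ε h u) (hε : 0 < ε) (ψ : H) :
    ‖A u‖ ≤ ε * (ε * ‖A ψ‖ + ‖B ψ - h‖) := by
  have key := hu.energy_le hε (ε ^ 2 • ψ)
  rw [map_smul, map_smul, ← smul_sub, norm_smul, norm_smul,
    Real.norm_of_nonneg (by positivity)] at key
  have hscale : (ε ^ 2)⁻¹ * (ε ^ 2 * ‖B ψ - h‖) ^ 2 = ε ^ 2 * ‖B ψ - h‖ ^ 2 := by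
    field_simp
  rw [← pow_le_pow_iff_left₀ (norm_nonneg _) (by positivity) two_ne_zero]
  nlinarith [mul_nonneg (inv_nonneg.2 (sq_nonneg ε)) (sq_nonneg ‖B u - ε ^ 2 • h‖),
    mul_nonneg (mul_nonneg hε.le hε.le) (mul_nonneg (norm_nonneg (A ψ)) (norm_nonneg (B ψ - h)))]

theorem norm_penalty_le (hu : IsPenalizedSolution A B ε h u) (hε : 0 < ε) :
    ‖B u‖ ≤ 2 * ε ^ 2 * ‖h‖ := by
  have key := hu.energy_le hε 0
  rw [map_zero, map_zero, norm_zero, zero_sub, norm_neg, norm_smul,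
    Real.norm_of_nonneg (by positivity)] at key
  have hscale : ‖B u - ε ^ 2 • h‖ ≤ ε ^ 2 * ‖h‖ := by
    rw [← pow_le_pow_iff_left₀ (norm_nonneg _) (by positivity) two_ne_zero]
    refine le_of_mul_le_mul_left ?_ (by positivity : 0 < (ε ^ 2)⁻¹)
    nlinarith [sq_nonneg ‖A u‖]
  calc ‖B u‖ = ‖(B u - ε ^ 2 • h) + ε ^ 2 • h‖ := by rw [sub_add_cancel]
    _ ≤ ‖B u - ε ^ 2 • h‖ + ‖ε ^ 2 • h‖ := norm_add_le _ _
    _ ≤ 2 * ε ^ 2 * ‖h‖ := by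
      rw [norm_smul, Real.norm_of_nonneg (by positivity)]; linarith

end IsPenalizedSolution

end PenalizedLeastSquares

theorem tendsto_nhdsGT_zero_of_le_mul_add {ι : Type*} {x : ℝ → ℝ} (C e : ι → ℝ)
    (hx₀ : ∀ ε > 0, 0 ≤ x ε) (hx : ∀ i, ∀ ε > 0, x ε ≤ ε * C i + e i)
    (he : ∀ δ > 0, ∃ i, e i < δ) :
    Tendsto x (𝓝[>] 0) (𝓝 0) := by
  refine tendsto_order.2 ⟨fun a ha => eventually_nhdsWithin_of_forall fun ε hε =>
    ha.trans_le (hx₀ ε hε), fun a ha => ?_⟩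
  obtain ⟨i, hi⟩ := he a ha
  have hlim : Tendsto (fun ε => ε * C i + e i) (𝓝[>] 0) (𝓝 (0 * C i + e i)) :=
    ((continuous_id.mul continuous_const).add continuous_const).continuousAt.tendsto.mono_left
      nhdsWithin_le_nhds
  rw [zero_mul, zero_add] at hlim
  filter_upwards [hlim.eventually_lt_const hi, self_mem_nhdsWithin] with ε hε hpos
  exact (hx i ε hpos).trans_lt hε

theorem stmt_8_general
    {H U V : Type*}
    [NormedAddCommGroup H] [InnerProductSpace ℝ H]
    [NormedAddCommGroup U] [InnerProductSpace ℝ U]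
    [NormedAddCommGroup V] [InnerProductSpace ℝ V] [CompleteSpace V]
    (A : H →L[ℝ] U) (B : H →L[ℝ] V)
    (c₁ : ℝ) (hc₁ : 0 < c₁)
    (hlow : ∀ v : H, c₁ * ‖v‖ ≤ ‖A v‖ + ‖B v‖)
    (f : H →L[ℝ] ℝ)
    (u : ℝ → H)
    (hu : ∀ ε : ℝ, 0 < ε → ∀ v : H,
      ⟪A (u ε), A v⟫ + (ε ^ 2)⁻¹ * ⟪B (u ε), B v⟫ = f v)
    (hms : ∃ g : V →L[ℝ] ℝ, ∀ v : H, f v = g (B v)) :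
    Tendsto (fun ε : ℝ => ε⁻¹ * ‖u ε‖) (𝓝[>] 0) (𝓝 0) := by
  obtain ⟨g, hg⟩ := hms
  set K := LinearMap.range (B : H →ₗ[ℝ] V)
  obtain ⟨h, hhK, hgh⟩ := K.exists_mem_topologicalClosure_forall_inner_eq g
  have hsol (ε : ℝ) (hε : 0 < ε) : IsPenalizedSolution (A : H →ₗ[ℝ] U) B ε h (u ε) := fun v => by
    rw [← hgh _ (K.le_topologicalClosure ⟨v, rfl⟩)]
    exact (hu ε hε v).trans (hg v)
  refine tendsto_nhdsGT_zero_of_le_mul_add (fun ψ => c₁⁻¹ * (‖A ψ‖ + 2 * ‖h‖))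
    (fun ψ => c₁⁻¹ * ‖B ψ - h‖) (fun ε hε => by positivity) (fun ψ ε hε => ?_) (fun δ hδ => ?_)
  · calc ε⁻¹ * ‖u ε‖ ≤ ε⁻¹ * (c₁⁻¹ * (‖A (u ε)‖ + ‖B (u ε)‖)) := by
          gcongr
          rw [le_inv_mul_iff₀ hc₁]
          exact hlow (u ε)
      _ ≤ ε⁻¹ * (c₁⁻¹ * (ε * (ε * ‖A ψ‖ + ‖B ψ - h‖) + 2 * ε ^ 2 * ‖h‖)) := by
          gcongr
          · exact (hsol ε hε).norm_le hε ψ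
          · exact (hsol ε hε).norm_penalty_le hε
      _ = ε * (c₁⁻¹ * (‖A ψ‖ + 2 * ‖h‖)) + c₁⁻¹ * ‖B ψ - h‖ := by
          field_simp
          ring
  · rw [← SetLike.mem_coe, Submodule.topologicalClosure_coe, Metric.mem_closure_iff] at hhK
    obtain ⟨_, ⟨ψ, rfl⟩, hψ⟩ := hhK (c₁ * δ) (by positivity)
    refine ⟨ψ, ?_⟩
    rw [inv_mul_lt_iff₀ hc₁, ← dist_eq_norm, dist_comm]
    exact hψ

/-- If there exists a continuous linear functional g on V with f(v) = g(B v) for all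
v ∈ H (the membrane/shear dominated case), then ‖u^ε‖_H = o(ε),
i.e. lim_{ε→0⁺} ε⁻¹ ‖u^ε‖_H = 0. -/
theorem stmt_8
    {H U V : Type*}
    [NormedAddCommGroup H] [InnerProductSpace ℝ H] [CompleteSpace H]
    [NormedAddCommGroup U] [InnerProductSpace ℝ U] [CompleteSpace U]
    [NormedAddCommGroup V] [InnerProductSpace ℝ V] [CompleteSpace V]
    (A : H →L[ℝ] U) (B : H →L[ℝ] V)
    (c₁ c₂ : ℝ) (hc₁ : 0 < c₁) (hc₂ : 0 < c₂)
    (hlow : ∀ v : H, c₁ * ‖v‖ ≤ ‖A v‖ + ‖B v‖)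
    (hup : ∀ v : H, ‖A v‖ + ‖B v‖ ≤ c₂ * ‖v‖)
    (f : H →L[ℝ] ℝ)
    (u : ℝ → H)
    (hu : ∀ ε : ℝ, 0 < ε → ∀ v : H,
      ⟪A (u ε), A v⟫ + (ε ^ 2)⁻¹ * ⟪B (u ε), B v⟫ = f v)
    (hms : ∃ g : V →L[ℝ] ℝ, ∀ v : H, f v = g (B v)) :
    Tendsto (fun ε : ℝ => ε⁻¹ * ‖u ε‖) (𝓝[>] 0) (𝓝 0) :=
  stmt_8_general A B c₁ hc₁ hlow f u hu hms
end

section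
/- If f(z) = 0 for all z ∈ ker B, then for every ε > 0 the solution u^ε of the scaled problem is orthogonal to ker B with respect to the inner product (x, y)_ℋ := ⟨A x, A y⟩_U + ⟨B x, B y⟩_V, i.e. (u^ε, z)_ℋ = 0 for all z ∈ ker B. -/
open RealInnerProductSpace

/-- If f(z) = 0 for all z ∈ ker B, then for every ε > 0 the solution u^ε of the scaled
problem is orthogonal to ker B with respect to the inner product
(x, y)_ℋ := ⟨A x, A y⟩_U + ⟨B x, B y⟩_V, i.e. (u^ε, z)_ℋ = 0 for all z ∈ ker B. -/
theorem stmt_9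
    {H U V : Type*}
    [NormedAddCommGroup H] [InnerProductSpace ℝ H] [CompleteSpace H]
    [NormedAddCommGroup U] [InnerProductSpace ℝ U] [CompleteSpace U]
    [NormedAddCommGroup V] [InnerProductSpace ℝ V] [CompleteSpace V]
    (A : H →L[ℝ] U) (B : H →L[ℝ] V)
    (c₁ c₂ : ℝ) (hc₁ : 0 < c₁) (hc₂ : 0 < c₂)
    (hlow : ∀ v : H, c₁ * ‖v‖ ≤ ‖A v‖ + ‖B v‖)
    (hup : ∀ v : H, ‖A v‖ + ‖B v‖ ≤ c₂ * ‖v‖)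
    (f : H →L[ℝ] ℝ)
    (hf : ∀ z : H, B z = 0 → f z = 0)
    (ε : ℝ) (hε : 0 < ε)
    (uε : H)
    (huε : ∀ v : H, ε ^ 2 * ⟪A uε, A v⟫ + ⟪B uε, B v⟫ = f v) :
    ∀ z : H, B z = 0 → ⟪A uε, A z⟫ + ⟪B uε, B z⟫ = 0 := by
  intro z hz
  have h := huε z
  rw [hz, hf z hz] at h
  simp only [inner_zero_right, add_zero] at h
  have hε2 : ε ^ 2 ≠ 0 := pow_ne_zero _ hε.ne'
  have : ⟪A uε, A z⟫ = 0 := by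
    rcases mul_eq_zero.mp h with h' | h'
    · exact absurd h' hε2
    · exact h'
  simp [hz, this]
end

section
/- Suppose f(v) = g(B v) for all v ∈ H, where g is a continuous linear functional on V. Let W̄ ⊆ V be the closure of the range of B and let w⁰ ∈ W̄ be the unique element with ⟨w⁰, w⟩_V = g(w) for all w ∈ W̄. Then the solutions u^ε of the scaled problem satisfy lim_{ε→0⁺} ‖B u^ε − w⁰‖_V = 0 and lim_{ε→0⁺} ( ε² ⟨A u^ε, A u^ε⟩_U + ⟨B u^ε, B u^ε⟩_V ) = ‖w⁰‖_V²; moreover, if f ≠ 0 then w⁰ ≠ 0, so the total strain energy converges to a nonzero limit. -/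
open RealInnerProductSpace Filter Topology

/-!
Since `f = g ∘ B` and `w₀` represents `g` on the closure of the range of `B`, the scaled
problem is the Euler–Lagrange equation of `v ↦ ε² ‖A v‖² + ‖B v - w₀‖²`, so `u^ε` minimizes
this penalized residual. Comparing with a fixed `v` whose `B v` is close to `w₀` shows that the
minimum tends to `0` as `ε → 0⁺`, which gives `B u^ε → w₀` and `ε² ‖A u^ε‖² → 0`.
-/

section PenalizedResidual

variable {H U V : Type*}
  [NormedAddCommGroup H] [InnerProductSpace ℝ H]
  [NormedAddCommGroup U] [InnerProductSpace ℝ U]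
  [NormedAddCommGroup V] [InnerProductSpace ℝ V]
  (A : H →ₗ[ℝ] U) (B : H →ₗ[ℝ] V)

def penalizedResidual (ε : ℝ) (w₀ : V) (v : H) : ℝ :=
  ε ^ 2 * ‖A v‖ ^ 2 + ‖B v - w₀‖ ^ 2

variable {A B}

theorem penalizedResidual_nonneg (ε : ℝ) (w₀ : V) (v : H) :
    0 ≤ penalizedResidual A B ε w₀ v := by
  unfold penalizedResidual
  positivity

theorem penalizedResidual_le_of_orthogonal {ε : ℝ} {w₀ : V} {u : H}
    (hu : ∀ w, ε ^ 2 * ⟪A u, A w⟫ + ⟪B u - w₀, B w⟫ = 0) (v : H) :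
    penalizedResidual A B ε w₀ u ≤ penalizedResidual A B ε w₀ v := by
  have hA : A v = A u + A (v - u) := by rw [map_sub]; abel
  have hB : B v - w₀ = (B u - w₀) + B (v - u) := by rw [map_sub]; abel
  -- The residual at `v` is the one at `u` plus `ε² ‖A (v - u)‖² + ‖B (v - u)‖²`:
  -- the cross terms cancel by `hu`.
  have hcross := hu (v - u)
  unfold penalizedResidual
  rw [hA, hB, norm_add_sq_real, norm_add_sq_real]
  nlinarith [sq_nonneg ε, sq_nonneg ‖A (v - u)‖, sq_nonneg ‖B (v - u)‖]

theorem tendsto_penalizedResidual_of_isMin {w₀ : V} (hw₀ : w₀ ∈ closure (Set.range B))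
    {u : ℝ → H}
    (hu : ∀ ε, 0 < ε → ∀ v, penalizedResidual A B ε w₀ (u ε) ≤ penalizedResidual A B ε w₀ v) :
    Tendsto (fun ε => penalizedResidual A B ε w₀ (u ε)) (𝓝[>] 0) (𝓝 0) := by
  refine tendsto_order.2 ⟨fun a ha => ?_, fun a ha => ?_⟩
  · exact Eventually.of_forall fun ε => ha.trans_le (penalizedResidual_nonneg ε w₀ (u ε))
  · obtain ⟨_, hclose, v, rfl⟩ := mem_closure_iff_nhds.mp hw₀ {x | ‖x - w₀‖ ^ 2 < a}
      ((isOpen_lt (by fun_prop) continuous_const).mem_nhds (by simpa))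
    have hlim : Tendsto (fun ε => penalizedResidual A B ε w₀ v) (𝓝[>] 0)
        (𝓝 (‖B v - w₀‖ ^ 2)) := by
      have hcont : Continuous fun ε => penalizedResidual A B ε w₀ v := by
        unfold penalizedResidual
        fun_prop
      simpa [penalizedResidual] using (hcont.tendsto 0).mono_left nhdsWithin_le_nhds
    filter_upwards [hlim.eventually (gt_mem_nhds hclose), self_mem_nhdsWithin] with ε hlt hε
    exact (hu ε hε v).trans_lt hlt

theorem tendsto_of_tendsto_penalizedResidual {w₀ : V} {u : ℝ → H} {l : Filter ℝ}
    (h : Tendsto (fun ε => penalizedResidual A B ε w₀ (u ε)) l (𝓝 0)) :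
    Tendsto (fun ε => B (u ε)) l (𝓝 w₀) ∧
    Tendsto (fun ε => ε ^ 2 * ‖A (u ε)‖ ^ 2) l (𝓝 0) := by
  constructor
  · rw [tendsto_iff_norm_sub_tendsto_zero]
    refine squeeze_zero (fun ε => norm_nonneg _) (fun ε => Real.le_sqrt_of_sq_le ?_)
      (by simpa using h.sqrt)
    exact le_add_of_nonneg_left (by positivity)
  · refine squeeze_zero (fun ε => by positivity) (fun ε => ?_) h
    exact le_add_of_nonneg_right (sq_nonneg _)

end PenalizedResidual

theorem stmt_10_general
    {H U V : Type*}
    [NormedAddCommGroup H] [InnerProductSpace ℝ H]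
    [NormedAddCommGroup U] [InnerProductSpace ℝ U]
    [NormedAddCommGroup V] [InnerProductSpace ℝ V]
    (A : H →L[ℝ] U) (B : H →L[ℝ] V)
    (f : H →L[ℝ] ℝ)
    (g : V →L[ℝ] ℝ) (hfg : ∀ v : H, f v = g (B v))
    (w₀ : V)
    (hw₀ : w₀ ∈ (LinearMap.range (B : H →ₗ[ℝ] V)).topologicalClosure)
    (hw₀' : ∀ w ∈ (LinearMap.range (B : H →ₗ[ℝ] V)).topologicalClosure,
      ⟪w₀, w⟫ = g w)
    (u : ℝ → H)
    (hu : ∀ ε : ℝ, 0 < ε → ∀ v : H,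
      ε ^ 2 * ⟪A (u ε), A v⟫ + ⟪B (u ε), B v⟫ = f v) :
    Tendsto (fun ε : ℝ => ‖B (u ε) - w₀‖) (𝓝[>] 0) (𝓝 0) ∧
    Tendsto (fun ε : ℝ => ε ^ 2 * ⟪A (u ε), A (u ε)⟫ + ⟪B (u ε), B (u ε)⟫)
      (𝓝[>] 0) (𝓝 (‖w₀‖ ^ 2)) ∧
    (f ≠ 0 → w₀ ≠ 0) := by
  have hf : ∀ v, f v = ⟪w₀, B v⟫ := fun v =>
    (hfg v).trans (hw₀' (B v) (Submodule.le_topologicalClosure _ ⟨v, rfl⟩)).symm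
  have horth : ∀ ε, 0 < ε → ∀ w, ε ^ 2 * ⟪A (u ε), A w⟫ + ⟪B (u ε) - w₀, B w⟫ = 0 := by
    intro ε hε w
    rw [inner_sub_left, ← hf, ← hu ε hε w]
    ring
  have hclosure : w₀ ∈ closure (Set.range (B : H →ₗ[ℝ] V)) := by
    rwa [← LinearMap.coe_range, ← Submodule.topologicalClosure_coe]
  obtain ⟨hBu, hAu⟩ := tendsto_of_tendsto_penalizedResidual
    (tendsto_penalizedResidual_of_isMin (A := (A : H →ₗ[ℝ] U)) hclosure
      fun ε hε => penalizedResidual_le_of_orthogonal (horth ε hε))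
  refine ⟨tendsto_iff_norm_sub_tendsto_zero.1 hBu, ?_, fun hf0 hw => hf0 ?_⟩
  · simpa only [real_inner_self_eq_norm_sq, ContinuousLinearMap.coe_coe, zero_add]
      using hAu.add (hBu.norm.pow 2)
  · ext v
    simp [hf, hw]

/-- Suppose f(v) = g(B v) for all v ∈ H, where g is a continuous linear functional on V.
Let W̄ ⊆ V be the closure of the range of B and let w⁰ ∈ W̄ be the unique element with
⟨w⁰, w⟩_V = g(w) for all w ∈ W̄. Then the solutions u^ε of the scaled problem satisfy
lim_{ε→0⁺} ‖B u^ε − w⁰‖_V = 0 and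
lim_{ε→0⁺} (ε² ⟨A u^ε, A u^ε⟩_U + ⟨B u^ε, B u^ε⟩_V) = ‖w⁰‖_V²; moreover, if f ≠ 0 then
w⁰ ≠ 0, so the total strain energy converges to a nonzero limit. -/
theorem stmt_10
    {H U V : Type*}
    [NormedAddCommGroup H] [InnerProductSpace ℝ H] [CompleteSpace H]
    [NormedAddCommGroup U] [InnerProductSpace ℝ U] [CompleteSpace U]
    [NormedAddCommGroup V] [InnerProductSpace ℝ V] [CompleteSpace V]
    (A : H →L[ℝ] U) (B : H →L[ℝ] V)
    (c₁ c₂ : ℝ) (hc₁ : 0 < c₁) (hc₂ : 0 < c₂)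
    (hlow : ∀ v : H, c₁ * ‖v‖ ≤ ‖A v‖ + ‖B v‖)
    (hup : ∀ v : H, ‖A v‖ + ‖B v‖ ≤ c₂ * ‖v‖)
    (f : H →L[ℝ] ℝ)
    (g : V →L[ℝ] ℝ) (hfg : ∀ v : H, f v = g (B v))
    (w₀ : V)
    (hw₀ : w₀ ∈ (LinearMap.range (B : H →ₗ[ℝ] V)).topologicalClosure)
    (hw₀' : ∀ w ∈ (LinearMap.range (B : H →ₗ[ℝ] V)).topologicalClosure,
      ⟪w₀, w⟫ = g w)
    (u : ℝ → H)
    (hu : ∀ ε : ℝ, 0 < ε → ∀ v : H,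
      ε ^ 2 * ⟪A (u ε), A v⟫ + ⟪B (u ε), B v⟫ = f v) :
    Tendsto (fun ε : ℝ => ‖B (u ε) - w₀‖) (𝓝[>] 0) (𝓝 0) ∧
    Tendsto (fun ε : ℝ => ε ^ 2 * ⟪A (u ε), A (u ε)⟫ + ⟪B (u ε), B (u ε)⟫)
      (𝓝[>] 0) (𝓝 (‖w₀‖ ^ 2)) ∧
    (f ≠ 0 → w₀ ≠ 0) :=
  stmt_10_general A B f g hfg w₀ hw₀ hw₀' u hu
end

section
/- Suppose f ≠ 0 and f(v) = g(B v) for all v ∈ H, where g is a continuous linear functional on V (the membrane/shear dominated case). Then the solutions u^ε of the scaled problem satisfy lim_{ε→0⁺} ε² ⟨A u^ε, A u^ε⟩_U / ⟨B u^ε, B u^ε⟩_V = 0. -/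
/-!
Testing the variational equation with `v = u` gives `a + b = f u` for `a = ε² ‖A u‖²`,
`b = ‖B u‖²`. Testing it with `v = u - w` shows that `u` minimises the energy
`ε² ‖A w‖² + ‖B w‖² - 2 f w`, so `f u ≥ 2 f w - ε² ‖A w‖² - ‖B w‖²` for every `w`; letting
`ε → 0` and then `w` vary, `liminf f u ≥ S := sup_w (2 f w - ‖B w‖²)`. Since `f = g ∘ B`,
`S ≤ ‖g‖²` is finite, and `S > 0` because `f ≠ 0`. On the other hand `2 a + b = 2 f u - ‖B u‖² ≤ S`.
Squeezing, `a + b → S` and `2 a + b → S`, hence `a → 0`, `b → S > 0` and `a / b → 0`.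
-/

open RealInnerProductSpace Filter Topology Set

section

variable {α : Type*} {l : Filter α} {a b : α → ℝ} {S : ℝ}

lemma tendsto_div_zero_of_two_mul_add_le (hS : 0 < S) (ha : ∀ᶠ x in l, 0 ≤ a x)
    (hupper : ∀ᶠ x in l, 2 * a x + b x ≤ S) (hlower : ∀ s < S, ∀ᶠ x in l, s < a x + b x) :
    Tendsto (fun x => a x / b x) l (𝓝 0) := by
  have hsum : Tendsto (fun x => a x + b x) l (𝓝 S) := by
    refine tendsto_order.2 ⟨hlower, fun s hs => ?_⟩
    filter_upwards [ha, hupper] with x hax hx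
    linarith
  have hsum₂ : Tendsto (fun x => 2 * a x + b x) l (𝓝 S) :=
    tendsto_of_tendsto_of_tendsto_of_le_of_le' hsum tendsto_const_nhds
      (by filter_upwards [ha] with x hx; linarith) hupper
  have ha₀ : Tendsto a l (𝓝 0) := by
    simpa only [sub_self, add_sub_add_right_eq_sub, two_mul, add_sub_cancel_right]
      using hsum₂.sub hsum
  have hb : Tendsto b l (𝓝 S) := by
    simpa only [sub_zero, add_sub_cancel_left] using hsum.sub ha₀
  rw [← zero_div S]
  exact ha₀.div hb hS.ne'

end

lemma two_mul_inner_sub_norm_sq_le {E : Type*} [NormedAddCommGroup E] [InnerProductSpace ℝ E]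
    (x y : E) : 2 * ⟪x, y⟫ - ‖y‖ ^ 2 ≤ ‖x‖ ^ 2 := by
  linarith [norm_sub_sq_real x y, sq_nonneg ‖x - y‖]

section

variable {H U V : Type*} [NormedAddCommGroup H] [InnerProductSpace ℝ H]
  [NormedAddCommGroup U] [InnerProductSpace ℝ U] [NormedAddCommGroup V] [InnerProductSpace ℝ V]

/-- Minus the infimum of the limit energy `‖B v‖² - 2 f v` of the problem at `ε = 0`. -/
noncomputable def limitEnergy (f : H →L[ℝ] ℝ) (B : H →L[ℝ] V) : ℝ :=
  ⨆ v, 2 * f v - ‖B v‖ ^ 2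

lemma bddAbove_range_two_mul_sub_norm_sq {f : H →L[ℝ] ℝ} {B : H →L[ℝ] V} {g : V →L[ℝ] ℝ}
    (hfg : ∀ v, f v = g (B v)) : BddAbove (range fun v => 2 * f v - ‖B v‖ ^ 2) := by
  refine ⟨‖g‖ ^ 2, ?_⟩
  rintro _ ⟨v, rfl⟩
  have hg : g (B v) ≤ ‖g‖ * ‖B v‖ := (le_abs_self _).trans (g.le_opNorm (B v))
  dsimp only
  rw [hfg v]
  nlinarith [sq_nonneg (‖B v‖ - ‖g‖)]

lemma two_mul_sub_norm_sq_le_limitEnergy {f : H →L[ℝ] ℝ} {B : H →L[ℝ] V} {g : V →L[ℝ] ℝ}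
    (hfg : ∀ v, f v = g (B v)) (v : H) : 2 * f v - ‖B v‖ ^ 2 ≤ limitEnergy f B :=
  le_ciSup (bddAbove_range_two_mul_sub_norm_sq hfg) v

lemma exists_two_mul_sub_norm_sq_pos {f : H →L[ℝ] ℝ} (hf : f ≠ 0) (B : H →L[ℝ] V) :
    ∃ v, 0 < 2 * f v - ‖B v‖ ^ 2 := by
  obtain ⟨v₀, hv₀⟩ : ∃ v, f v ≠ 0 := by simpa [DFunLike.ne_iff] using hf
  obtain ⟨w, hw⟩ : ∃ w, f w = 1 := ⟨(f v₀)⁻¹ • v₀, by simp [hv₀]⟩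
  set t := (‖B w‖ ^ 2 + 1)⁻¹
  have ht : 0 < t := by positivity
  have htB : t * ‖B w‖ ^ 2 < 1 := by
    rw [inv_mul_lt_one₀ (by positivity)]
    linarith
  refine ⟨t • w, ?_⟩
  rw [map_smul, map_smul, hw, norm_smul, mul_pow, Real.norm_eq_abs, sq_abs, smul_eq_mul]
  nlinarith

lemma limitEnergy_pos {f : H →L[ℝ] ℝ} {B : H →L[ℝ] V} {g : V →L[ℝ] ℝ} (hf : f ≠ 0)
    (hfg : ∀ v, f v = g (B v)) : 0 < limitEnergy f B :=
  let ⟨v, hv⟩ := exists_two_mul_sub_norm_sq_pos hf B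
  hv.trans_le (two_mul_sub_norm_sq_le_limitEnergy hfg v)

lemma two_mul_sub_le_of_forall_inner_eq {A : H →L[ℝ] U} {B : H →L[ℝ] V} {f : H →L[ℝ] ℝ}
    {c : ℝ} {u : H} (hc : 0 ≤ c) (hu : ∀ v, c * ⟪A u, A v⟫ + ⟪B u, B v⟫ = f v) (w : H) :
    2 * f w - c * ‖A w‖ ^ 2 - ‖B w‖ ^ 2 ≤ f u := by
  have hA := mul_le_mul_of_nonneg_left (two_mul_inner_sub_norm_sq_le (A u) (A w)) hc
  have hB := two_mul_inner_sub_norm_sq_le (B u) (B w)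
  rw [← hu w, ← hu u, real_inner_self_eq_norm_sq, real_inner_self_eq_norm_sq]
  linarith

lemma eventually_lt_apply_solution {A : H →L[ℝ] U} {B : H →L[ℝ] V} {f : H →L[ℝ] ℝ} {u : ℝ → H}
    (hu : ∀ ε : ℝ, 0 < ε → ∀ v : H, ε ^ 2 * ⟪A (u ε), A v⟫ + ⟪B (u ε), B v⟫ = f v)
    {s : ℝ} (hs : s < limitEnergy f B) : ∀ᶠ ε in 𝓝[>] 0, s < f (u ε) := by
  obtain ⟨w, hw⟩ := exists_lt_of_lt_ciSup hs
  have hlim : Tendsto (fun ε : ℝ => 2 * f w - ε ^ 2 * ‖A w‖ ^ 2 - ‖B w‖ ^ 2) (𝓝[>] 0)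
      (𝓝 (2 * f w - ‖B w‖ ^ 2)) := by
    have : Continuous fun ε : ℝ => 2 * f w - ε ^ 2 * ‖A w‖ ^ 2 - ‖B w‖ ^ 2 := by fun_prop
    simpa using (this.tendsto 0).mono_left nhdsWithin_le_nhds
  filter_upwards [hlim.eventually (lt_mem_nhds hw), self_mem_nhdsWithin] with ε hεw hε
  exact hεw.trans_le (two_mul_sub_le_of_forall_inner_eq (sq_nonneg ε) (hu ε hε) w)

end

theorem stmt_11_general
    {H U V : Type*}
    [NormedAddCommGroup H] [InnerProductSpace ℝ H]
    [NormedAddCommGroup U] [InnerProductSpace ℝ U]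
    [NormedAddCommGroup V] [InnerProductSpace ℝ V]
    (A : H →L[ℝ] U) (B : H →L[ℝ] V)
    (f : H →L[ℝ] ℝ) (hf : f ≠ 0)
    (g : V →L[ℝ] ℝ) (hfg : ∀ v : H, f v = g (B v))
    (u : ℝ → H)
    (hu : ∀ ε : ℝ, 0 < ε → ∀ v : H,
      ε ^ 2 * ⟪A (u ε), A v⟫ + ⟪B (u ε), B v⟫ = f v) :
    Tendsto (fun ε : ℝ => ε ^ 2 * ⟪A (u ε), A (u ε)⟫ / ⟪B (u ε), B (u ε)⟫)
      (𝓝[>] 0) (𝓝 0) := by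
  have henergy : ∀ ε : ℝ, 0 < ε → ε ^ 2 * ‖A (u ε)‖ ^ 2 + ‖B (u ε)‖ ^ 2 = f (u ε) :=
    fun ε hε => by simpa only [real_inner_self_eq_norm_sq] using hu ε hε (u ε)
  simp only [real_inner_self_eq_norm_sq]
  refine tendsto_div_zero_of_two_mul_add_le (limitEnergy_pos hf hfg)
    (Eventually.of_forall fun ε => by positivity) ?_ fun s hs => ?_
  · filter_upwards [self_mem_nhdsWithin] with ε hε
    have hu_le := two_mul_sub_norm_sq_le_limitEnergy hfg (u ε)
    rw [← henergy ε hε] at hu_le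
    linarith
  · filter_upwards [eventually_lt_apply_solution hu hs, self_mem_nhdsWithin] with ε hεs hε
    rwa [henergy ε hε]

/-- Suppose f ≠ 0 and f(v) = g(B v) for all v ∈ H, where g is a continuous linear
functional on V (the membrane/shear dominated case). Then the solutions u^ε of the scaled
problem satisfy lim_{ε→0⁺} ε² ⟨A u^ε, A u^ε⟩_U / ⟨B u^ε, B u^ε⟩_V = 0. -/
theorem stmt_11
    {H U V : Type*}
    [NormedAddCommGroup H] [InnerProductSpace ℝ H] [CompleteSpace H]
    [NormedAddCommGroup U] [InnerProductSpace ℝ U] [CompleteSpace U]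
    [NormedAddCommGroup V] [InnerProductSpace ℝ V] [CompleteSpace V]
    (A : H →L[ℝ] U) (B : H →L[ℝ] V)
    (c₁ c₂ : ℝ) (hc₁ : 0 < c₁) (hc₂ : 0 < c₂)
    (hlow : ∀ v : H, c₁ * ‖v‖ ≤ ‖A v‖ + ‖B v‖)
    (hup : ∀ v : H, ‖A v‖ + ‖B v‖ ≤ c₂ * ‖v‖)
    (f : H →L[ℝ] ℝ) (hf : f ≠ 0)
    (g : V →L[ℝ] ℝ) (hfg : ∀ v : H, f v = g (B v))
    (u : ℝ → H)
    (hu : ∀ ε : ℝ, 0 < ε → ∀ v : H,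
      ε ^ 2 * ⟪A (u ε), A v⟫ + ⟪B (u ε), B v⟫ = f v) :
    Tendsto (fun ε : ℝ => ε ^ 2 * ⟪A (u ε), A (u ε)⟫ / ⟪B (u ε), B (u ε)⟫)
      (𝓝[>] 0) (𝓝 0) :=
  stmt_11_general A B f hf g hfg u hu
end

section
/- Suppose f(z) = 0 for all z ∈ ker B but there is no continuous linear functional g on V with f(v) = g(B v) for all v ∈ H (the intermediate case). Then the total strain energy of the solutions u^ε of the scaled problem blows up at a rate of o(ε⁻²): as ε → 0⁺, ε² ⟨A u^ε, A u^ε⟩_U + ⟨B u^ε, B u^ε⟩_V → ∞ while ε² ( ε² ⟨A u^ε, A u^ε⟩_U + ⟨B u^ε, B u^ε⟩_V ) → 0. -/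
/-!
Write `E(ε) = ε²‖A u^ε‖² + ‖B u^ε‖²`. Since `u^ε` represents `f` in the energy inner product
`ε²⟪A·, A·⟫ + ⟪B·, B·⟫`, Cauchy–Schwarz gives `f(v)² ≤ E(ε) (ε²‖A v‖² + ‖B v‖²)`, so
`liminf E(ε) ≥ f(v)² / ‖B v‖²` for every `v`; this ratio is unbounded because otherwise `f` would
factor through a bounded functional on `range B`, which Hahn–Banach extends to `V`.

For the rate, `f ⊥ ker B` puts the Riesz vector of `f` in `(ker B)ᗮ = closure (range B†)`, so
`|f w - ⟪q, B w⟫| ≤ δ ‖w‖` for some `q`. Testing with `w = u^ε` and using the coercivity of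
`(A, B)` yields `ε √E(ε) ≤ ε ‖q‖ + 2δ / c₁`, hence `limsup ε² E(ε) ≤ 4δ² / c₁²` for every `δ > 0`.
-/

open RealInnerProductSpace Filter Topology

theorem sq_inner_add_inner_le {E F : Type*} [NormedAddCommGroup E] [InnerProductSpace ℝ E]
    [NormedAddCommGroup F] [InnerProductSpace ℝ F] (x₁ y₁ : E) (x₂ y₂ : F) :
    (⟪x₁, y₁⟫ + ⟪x₂, y₂⟫) ^ 2 ≤ (‖x₁‖ ^ 2 + ‖x₂‖ ^ 2) * (‖y₁‖ ^ 2 + ‖y₂‖ ^ 2) := by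
  have h₁ := abs_real_inner_le_norm x₁ y₁
  have h₂ := abs_real_inner_le_norm x₂ y₂
  calc (⟪x₁, y₁⟫ + ⟪x₂, y₂⟫) ^ 2 ≤ (‖x₁‖ * ‖y₁‖ + ‖x₂‖ * ‖y₂‖) ^ 2 :=
        sq_le_sq' (by linarith [neg_abs_le ⟪x₁, y₁⟫, neg_abs_le ⟪x₂, y₂⟫])
          (by linarith [le_abs_self ⟪x₁, y₁⟫, le_abs_self ⟪x₂, y₂⟫])
    _ ≤ (‖x₁‖ ^ 2 + ‖x₂‖ ^ 2) * (‖y₁‖ ^ 2 + ‖y₂‖ ^ 2) := by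
        nlinarith [sq_nonneg (‖x₁‖ * ‖y₂‖ - ‖x₂‖ * ‖y₁‖)]

theorem exists_comp_eq_of_abs_le {E F : Type*} [NormedAddCommGroup E] [NormedSpace ℝ E]
    [NormedAddCommGroup F] [NormedSpace ℝ F] (B : E →L[ℝ] F) (f : E →L[ℝ] ℝ) (C : ℝ)
    (hC : ∀ v, |f v| ≤ C * ‖B v‖) : ∃ g : F →L[ℝ] ℝ, ∀ v, f v = g (B v) := by
  have hker : LinearMap.ker (B : E →ₗ[ℝ] F) ≤ LinearMap.ker (f : E →ₗ[ℝ] ℝ) := fun v hv => by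
    have hBv : B v = 0 := hv
    simpa [hBv] using hC v
  let g₀ : LinearMap.range (B : E →ₗ[ℝ] F) →ₗ[ℝ] ℝ :=
    (LinearMap.ker (B : E →ₗ[ℝ] F)).liftQ f hker ∘ₗ
      (LinearMap.quotKerEquivRange (B : E →ₗ[ℝ] F)).symm.toLinearMap
  have hg₀ : ∀ v, g₀ ⟨B v, v, rfl⟩ = f v := fun v => by
    simp only [g₀, LinearMap.comp_apply, LinearEquiv.coe_coe]
    exact congrArg _ (LinearMap.quotKerEquivRange_symm_apply_image (B : E →ₗ[ℝ] F) v _)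
  have hbound : ∀ y, ‖g₀ y‖ ≤ C * ‖y‖ := by
    rintro ⟨_, v, rfl⟩
    simpa [hg₀] using hC v
  obtain ⟨g, hg, -⟩ := exists_extension_norm_eq _ (g₀.mkContinuous C hbound)
  exact ⟨g, fun v => by simpa [hg₀] using (hg ⟨B v, v, rfl⟩).symm⟩

section Energy

variable {H U V : Type*}
    [NormedAddCommGroup H] [InnerProductSpace ℝ H]
    [NormedAddCommGroup U] [InnerProductSpace ℝ U]
    [NormedAddCommGroup V] [InnerProductSpace ℝ V]

def energy (A : H →L[ℝ] U) (B : H →L[ℝ] V) (ε : ℝ) (v : H) : ℝ :=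
  ε ^ 2 * ⟪A v, A v⟫ + ⟪B v, B v⟫

theorem energy_eq_norm_sq (A : H →L[ℝ] U) (B : H →L[ℝ] V) (ε : ℝ) (v : H) :
    energy A B ε v = ‖ε • A v‖ ^ 2 + ‖B v‖ ^ 2 := by
  simp [energy, norm_smul, mul_pow]

theorem energy_nonneg (A : H →L[ℝ] U) (B : H →L[ℝ] V) (ε : ℝ) (v : H) : 0 ≤ energy A B ε v := by
  rw [energy_eq_norm_sq]
  positivity

theorem continuous_energy (A : H →L[ℝ] U) (B : H →L[ℝ] V) (v : H) :
    Continuous fun ε => energy A B ε v := by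
  unfold energy
  fun_prop

theorem energy_zero (A : H →L[ℝ] U) (B : H →L[ℝ] V) (v : H) : energy A B 0 v = ‖B v‖ ^ 2 := by
  simp [energy_eq_norm_sq]

theorem sq_le_energy_mul_energy {A : H →L[ℝ] U} {B : H →L[ℝ] V} {f : H →L[ℝ] ℝ} {ε : ℝ}
    {u : H} (hu : ∀ v, ε ^ 2 * ⟪A u, A v⟫ + ⟪B u, B v⟫ = f v) (v : H) :
    f v ^ 2 ≤ energy A B ε u * energy A B ε v := by
  rw [← hu v, energy_eq_norm_sq, energy_eq_norm_sq]
  simpa [real_inner_smul_left, real_inner_smul_right, ← mul_assoc, ← pow_two]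
    using sq_inner_add_inner_le (ε • A u) (ε • A v) (B u) (B v)

theorem exists_mul_sq_lt_sq_of_not_exists_comp {B : H →L[ℝ] V} {f : H →L[ℝ] ℝ}
    (hnot : ¬ ∃ g : V →L[ℝ] ℝ, ∀ v, f v = g (B v)) (M : ℝ) :
    ∃ v, M * ‖B v‖ ^ 2 < f v ^ 2 := by
  by_contra! h
  refine hnot (exists_comp_eq_of_abs_le B f √M fun v => ?_)
  rw [← Real.sqrt_sq_eq_abs, ← Real.sqrt_sq (norm_nonneg (B v)), ← Real.sqrt_mul' _ (by positivity)]
  exact Real.sqrt_le_sqrt (h v)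

theorem tendsto_energy_atTop {A : H →L[ℝ] U} {B : H →L[ℝ] V} {f : H →L[ℝ] ℝ}
    (hnot : ¬ ∃ g : V →L[ℝ] ℝ, ∀ v, f v = g (B v)) {u : ℝ → H}
    (hu : ∀ ε, 0 < ε → ∀ v, ε ^ 2 * ⟪A (u ε), A v⟫ + ⟪B (u ε), B v⟫ = f v) :
    Tendsto (fun ε => energy A B ε (u ε)) (𝓝[>] 0) atTop := by
  refine tendsto_atTop.2 fun M => ?_
  obtain ⟨v, hv⟩ := exists_mul_sq_lt_sq_of_not_exists_comp hnot M
  have hlim : Tendsto (fun ε => M * energy A B ε v) (𝓝[>] 0) (𝓝 (M * ‖B v‖ ^ 2)) := by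
    rw [← energy_zero A B v]
    exact (((continuous_energy A B v).tendsto 0).const_mul M).mono_left nhdsWithin_le_nhds
  filter_upwards [hlim.eventually (gt_mem_nhds hv), self_mem_nhdsWithin] with ε hMε hε
  exact (lt_of_mul_lt_mul_right (hMε.trans_le (sq_le_energy_mul_energy (hu ε hε) v))
    (energy_nonneg A B ε v)).le

theorem exists_abs_sub_inner_le [CompleteSpace H] [CompleteSpace V] {B : H →L[ℝ] V}
    {f : H →L[ℝ] ℝ} (hf : ∀ z, B z = 0 → f z = 0) {δ : ℝ} (hδ : 0 < δ) :
    ∃ q : V, ∀ w, |f w - ⟪q, B w⟫| ≤ δ * ‖w‖ := by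
  set r := (InnerProductSpace.toDual ℝ H).symm f
  have hr : r ∈ B.kerᗮ := fun w hw => by
    rw [real_inner_comm, InnerProductSpace.toDual_symm_apply]
    exact hf w hw
  rw [B.orthogonal_ker] at hr
  obtain ⟨_, ⟨q, rfl⟩, hq⟩ := Metric.mem_closure_iff.mp hr δ hδ
  refine ⟨q, fun w => ?_⟩
  rw [← InnerProductSpace.toDual_symm_apply (y := f), ← B.adjoint_inner_left, ← inner_sub_left]
  exact (abs_real_inner_le_norm _ _).trans
    (mul_le_mul_of_nonneg_right (dist_eq_norm r _ ▸ hq.le) (norm_nonneg w))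

theorem sq_mul_energy_le {A : H →L[ℝ] U} {B : H →L[ℝ] V} {f : H →L[ℝ] ℝ} {ε η : ℝ} {u : H}
    {q : V} (hε₀ : 0 ≤ ε) (hε₁ : ε ≤ 1) (hη : 0 ≤ η)
    (hu : ∀ v, ε ^ 2 * ⟪A u, A v⟫ + ⟪B u, B v⟫ = f v)
    (hq : ∀ w, |f w - ⟪q, B w⟫| ≤ η * (‖A w‖ + ‖B w‖)) :
    ε ^ 2 * energy A B ε u ≤ (ε * ‖q‖ + 2 * η) ^ 2 := by
  set r := √(energy A B ε u)
  have hr : r ^ 2 = energy A B ε u := Real.sq_sqrt (energy_nonneg A B ε u)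
  have hA : ε * ‖A u‖ ≤ r := Real.le_sqrt_of_sq_le <| by
    rw [energy_eq_norm_sq, norm_smul, Real.norm_of_nonneg hε₀]
    exact le_add_of_nonneg_right (sq_nonneg _)
  have hB : ‖B u‖ ≤ r := Real.le_sqrt_of_sq_le <| by
    rw [energy_eq_norm_sq]
    exact le_add_of_nonneg_left (sq_nonneg _)
  have hbound : r ^ 2 ≤ ‖q‖ * ‖B u‖ + η * (‖A u‖ + ‖B u‖) := by
    rw [hr, energy, hu u]
    linarith [le_of_abs_le (hq u), real_inner_le_norm q (B u)]
  have hεB : ε * ‖B u‖ ≤ r := (mul_le_of_le_one_left (norm_nonneg _) hε₁).trans hB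
  have hquad : ε * r ^ 2 ≤ (ε * ‖q‖ + 2 * η) * r :=
    calc ε * r ^ 2 ≤ ε * (‖q‖ * ‖B u‖ + η * (‖A u‖ + ‖B u‖)) :=
          mul_le_mul_of_nonneg_left hbound hε₀
      _ = ε * ‖q‖ * ‖B u‖ + η * (ε * ‖A u‖ + ε * ‖B u‖) := by ring
      _ ≤ ε * ‖q‖ * r + η * (r + r) := by gcongr
      _ = (ε * ‖q‖ + 2 * η) * r := by ring
  have hεr : ε * r ≤ ε * ‖q‖ + 2 * η := by
    nlinarith [mul_le_mul_of_nonneg_left hquad hε₀, mul_nonneg hε₀ (norm_nonneg q)]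
  calc ε ^ 2 * energy A B ε u = (ε * r) ^ 2 := by rw [mul_pow, hr]
    _ ≤ (ε * ‖q‖ + 2 * η) ^ 2 :=
      pow_le_pow_left₀ (mul_nonneg hε₀ (Real.sqrt_nonneg _)) hεr 2

theorem tendsto_sq_mul_energy_zero [CompleteSpace H] [CompleteSpace V] {A : H →L[ℝ] U}
    {B : H →L[ℝ] V} {f : H →L[ℝ] ℝ} {c : ℝ} (hc : 0 < c)
    (hlow : ∀ v, c * ‖v‖ ≤ ‖A v‖ + ‖B v‖) (hf : ∀ z, B z = 0 → f z = 0) {u : ℝ → H}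
    (hu : ∀ ε, 0 < ε → ∀ v, ε ^ 2 * ⟪A (u ε), A v⟫ + ⟪B (u ε), B v⟫ = f v) :
    Tendsto (fun ε => ε ^ 2 * energy A B ε (u ε)) (𝓝[>] 0) (𝓝 0) := by
  refine tendsto_order.2 ⟨fun a ha => Eventually.of_forall fun ε =>
    ha.trans_le (mul_nonneg (sq_nonneg ε) (energy_nonneg A B ε (u ε))), fun a ha => ?_⟩
  obtain ⟨η, hη, hηa⟩ : ∃ η > 0, (2 * η) ^ 2 < a := ⟨√a / 4, by positivity, by
    rw [show (2 * (√a / 4)) ^ 2 = √a ^ 2 / 4 by ring, Real.sq_sqrt ha.le]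
    linarith⟩
  obtain ⟨q, hq⟩ := exists_abs_sub_inner_le hf (mul_pos hc hη)
  have hq' : ∀ w, |f w - ⟪q, B w⟫| ≤ η * (‖A w‖ + ‖B w‖) := fun w =>
    calc |f w - ⟪q, B w⟫| ≤ c * η * ‖w‖ := hq w
      _ = η * (c * ‖w‖) := by ring
      _ ≤ η * (‖A w‖ + ‖B w‖) := mul_le_mul_of_nonneg_left (hlow w) hη.le
  have hlim : Tendsto (fun ε => (ε * ‖q‖ + 2 * η) ^ 2) (𝓝[>] 0) (𝓝 ((2 * η) ^ 2)) := by
    have hcont : Continuous fun ε : ℝ => (ε * ‖q‖ + 2 * η) ^ 2 := by fun_prop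
    simpa using (hcont.tendsto 0).mono_left nhdsWithin_le_nhds
  filter_upwards [hlim.eventually (gt_mem_nhds hηa), Ioo_mem_nhdsGT one_pos] with ε hεa hε
  exact (sq_mul_energy_le hε.1.le hε.2.le hη.le (hu ε hε.1) hq').trans_lt hεa

end Energy

theorem stmt_12_general
    {H U V : Type*}
    [NormedAddCommGroup H] [InnerProductSpace ℝ H] [CompleteSpace H]
    [NormedAddCommGroup U] [InnerProductSpace ℝ U]
    [NormedAddCommGroup V] [InnerProductSpace ℝ V] [CompleteSpace V]
    (A : H →L[ℝ] U) (B : H →L[ℝ] V)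
    (c₁ : ℝ) (hc₁ : 0 < c₁)
    (hlow : ∀ v : H, c₁ * ‖v‖ ≤ ‖A v‖ + ‖B v‖)
    (f : H →L[ℝ] ℝ)
    (hf : ∀ z : H, B z = 0 → f z = 0)
    (hnot : ¬ ∃ g : V →L[ℝ] ℝ, ∀ v : H, f v = g (B v))
    (u : ℝ → H)
    (hu : ∀ ε : ℝ, 0 < ε → ∀ v : H,
      ε ^ 2 * ⟪A (u ε), A v⟫ + ⟪B (u ε), B v⟫ = f v) :
    Tendsto (fun ε : ℝ => ε ^ 2 * ⟪A (u ε), A (u ε)⟫ + ⟪B (u ε), B (u ε)⟫)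
      (𝓝[>] 0) atTop ∧
    Tendsto
      (fun ε : ℝ => ε ^ 2 * (ε ^ 2 * ⟪A (u ε), A (u ε)⟫ + ⟪B (u ε), B (u ε)⟫))
      (𝓝[>] 0) (𝓝 0) :=
  ⟨tendsto_energy_atTop hnot hu, tendsto_sq_mul_energy_zero hc₁ hlow hf hu⟩

/-- Suppose f(z) = 0 for all z ∈ ker B but there is no continuous linear functional g on
V with f(v) = g(B v) for all v ∈ H (the intermediate case). Then the total strain energy
of the solutions u^ε of the scaled problem blows up at a rate of o(ε⁻²): as ε → 0⁺,
ε² ⟨A u^ε, A u^ε⟩_U + ⟨B u^ε, B u^ε⟩_V → ∞ while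
ε² (ε² ⟨A u^ε, A u^ε⟩_U + ⟨B u^ε, B u^ε⟩_V) → 0. -/
theorem stmt_12
    {H U V : Type*}
    [NormedAddCommGroup H] [InnerProductSpace ℝ H] [CompleteSpace H]
    [NormedAddCommGroup U] [InnerProductSpace ℝ U] [CompleteSpace U]
    [NormedAddCommGroup V] [InnerProductSpace ℝ V] [CompleteSpace V]
    (A : H →L[ℝ] U) (B : H →L[ℝ] V)
    (c₁ c₂ : ℝ) (hc₁ : 0 < c₁) (hc₂ : 0 < c₂)
    (hlow : ∀ v : H, c₁ * ‖v‖ ≤ ‖A v‖ + ‖B v‖)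
    (hup : ∀ v : H, ‖A v‖ + ‖B v‖ ≤ c₂ * ‖v‖)
    (f : H →L[ℝ] ℝ)
    (hf : ∀ z : H, B z = 0 → f z = 0)
    (hnot : ¬ ∃ g : V →L[ℝ] ℝ, ∀ v : H, f v = g (B v))
    (u : ℝ → H)
    (hu : ∀ ε : ℝ, 0 < ε → ∀ v : H,
      ε ^ 2 * ⟪A (u ε), A v⟫ + ⟪B (u ε), B v⟫ = f v) :
    Tendsto (fun ε : ℝ => ε ^ 2 * ⟪A (u ε), A (u ε)⟫ + ⟪B (u ε), B (u ε)⟫)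
      (𝓝[>] 0) atTop ∧
    Tendsto
      (fun ε : ℝ => ε ^ 2 * (ε ^ 2 * ⟪A (u ε), A (u ε)⟫ + ⟪B (u ε), B (u ε)⟫))
      (𝓝[>] 0) (𝓝 0) :=
  stmt_12_general A B c₁ hc₁ hlow f hf hnot u hu
end

section
/- There exists a constant K > 0 depending only on C such that for every ε with 0 < ε ≤ 1 and every u ∈ H, p ∈ V, the quantity ‖u‖_H + |p|_V̄ + ε‖p‖_V is bounded above and below, up to the factor K, by sup over (v, q) ∈ H × V with (v, q) ≠ (0, 0) of [ a(u, v) + b(v, p) − b(u, q) + ε² c(p, q) ] / ( ‖v‖_H + |q|_V̄ + ε‖q‖_V ); that is, K⁻¹ ( ‖u‖_H + |p|_V̄ + ε‖p‖_V ) ≤ sup_{(v,q)≠(0,0)} [ a(u,v) + b(v,p) − b(u,q) + ε² c(p,q) ] / ( ‖v‖_H + |q|_V̄ + ε‖q‖_V ) ≤ K ( ‖u‖_H + |p|_V̄ + ε‖p‖_V ). -/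
/-!
Write `B((u,p),(v,q)) = a(u,v) + b(v,p) - b(u,q) + ε² c(p,q)` and
`‖(v,q)‖ = ‖v‖ + |q|_V̄ + ε‖q‖`, and let `S` be the supremum in question.

The upper bound `S ≤ (C + 1) ‖(u,p)‖` is continuity of `B` in these norms, the term `b(v,p)` being
controlled by `|p|_V̄ ‖v‖` by the very definition of `|p|_V̄`.

For the lower bound, testing with `(v,q) = (u,p)` and coercivity give
`‖u‖² + ε²‖p‖² ≤ C S ‖(u,p)‖`, while testing with `(v,0)` gives `|p|_V̄ ≤ S + C‖u‖`.
Hence `X := ‖(u,p)‖ ≤ Y + S` with `Y = (1 + C)(‖u‖ + ε‖p‖)` and `Y² ≤ 2C(1 + C)² S X`, and these two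
inequalities force `X ≤ (2C(1 + C)² + 2) S`.
-/

/-- The weaker seminorm |q|_V̄ := sup_{v ∈ H, v ≠ 0} b(v, q)/‖v‖. -/
noncomputable def weakSeminorm {H V : Type*}
    [NormedAddCommGroup H] [InnerProductSpace ℝ H]
    [NormedAddCommGroup V] [InnerProductSpace ℝ V]
    (b : H →ₗ[ℝ] V →ₗ[ℝ] ℝ) (q : V) : ℝ :=
  sSup {r : ℝ | ∃ v : H, v ≠ 0 ∧ r = b v q / ‖v‖}

section WeakSeminorm

variable {H V : Type*} [NormedAddCommGroup H] [InnerProductSpace ℝ H]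
  [NormedAddCommGroup V] [InnerProductSpace ℝ V] {b : H →ₗ[ℝ] V →ₗ[ℝ] ℝ}

theorem weakSeminorm_le {q : V} {M : ℝ} (hM : 0 ≤ M) (h : ∀ v : H, v ≠ 0 → b v q ≤ M * ‖v‖) :
    weakSeminorm b q ≤ M := by
  refine Real.sSup_le ?_ hM
  rintro r ⟨v, hv, rfl⟩
  exact (div_le_iff₀ (norm_pos_iff.mpr hv)).mpr (h v hv)

theorem weakSeminorm_zero : weakSeminorm b (0 : V) = 0 := by
  refine le_antisymm (weakSeminorm_le le_rfl fun v _ => by simp) (Real.sSup_nonneg ?_)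
  rintro r ⟨v, -, rfl⟩
  simp

theorem weakSeminorm_nonneg (q : V) : 0 ≤ weakSeminorm b q := by
  rcases subsingleton_or_nontrivial H with hH | hH
  · refine Real.sSup_nonneg ?_
    rintro r ⟨v, hv, -⟩
    exact absurd (Subsingleton.elim v 0) hv
  obtain ⟨v, hv⟩ := exists_ne (0 : H)
  have hv' : 0 < ‖v‖ := norm_pos_iff.mpr hv
  refine Real.sSup_nonneg' ?_
  rcases le_total 0 (b v q) with h | h
  · exact ⟨_, ⟨v, hv, rfl⟩, by positivity⟩
  · refine ⟨_, ⟨-v, neg_ne_zero.mpr hv, rfl⟩, ?_⟩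
    rw [map_neg, LinearMap.neg_apply, norm_neg]
    exact div_nonneg (neg_nonneg.mpr h) hv'.le

theorem apply_le_weakSeminorm_mul_norm {C : ℝ} (hb : ∀ v q, |b v q| ≤ C * ‖v‖ * ‖q‖)
    (v : H) (q : V) : b v q ≤ weakSeminorm b q * ‖v‖ := by
  rcases eq_or_ne v 0 with rfl | hv
  · simp
  have hv' : 0 < ‖v‖ := norm_pos_iff.mpr hv
  have hbdd : BddAbove {r : ℝ | ∃ v : H, v ≠ 0 ∧ r = b v q / ‖v‖} := by
    refine ⟨C * ‖q‖, ?_⟩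
    rintro r ⟨w, hw, rfl⟩
    rw [div_le_iff₀ (norm_pos_iff.mpr hw)]
    linarith [le_abs_self (b w q), hb w q]
  exact (div_le_iff₀ hv').mp (le_csSup hbdd ⟨v, hv, rfl⟩)

end WeakSeminorm

theorem le_mul_of_le_add_of_sq_le_mul {X Y S k : ℝ} (hk : 0 ≤ k) (hS : 0 ≤ S)
    (hXY : X ≤ Y + S) (hY : Y ^ 2 ≤ k * S * X) : X ≤ (k + 2) * S := by
  rcases le_or_gt X S with h | h
  · nlinarith
  · have hX : 0 < X := hS.trans_lt h
    have : (X - S) ^ 2 ≤ Y ^ 2 := pow_le_pow_left₀ (by linarith) (by linarith) 2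
    nlinarith

section SaddlePoint

variable {H V : Type*} [NormedAddCommGroup H] [InnerProductSpace ℝ H]
  [NormedAddCommGroup V] [InnerProductSpace ℝ V]
  (a : H →ₗ[ℝ] H →ₗ[ℝ] ℝ) (b : H →ₗ[ℝ] V →ₗ[ℝ] ℝ) (c : V →ₗ[ℝ] V →ₗ[ℝ] ℝ) (ε : ℝ)

def saddleForm (u : H) (p : V) (v : H) (q : V) : ℝ :=
  a u v + b v p - b u q + ε ^ 2 * c p q

noncomputable def saddleNorm (v : H) (q : V) : ℝ :=
  ‖v‖ + weakSeminorm b q + ε * ‖q‖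

noncomputable def saddleQuotients (u : H) (p : V) : Set ℝ :=
  {r : ℝ | ∃ (v : H) (q : V), (v, q) ≠ (0, 0) ∧
    r = saddleForm a b c ε u p v q / saddleNorm b ε v q}

noncomputable def saddleDualNorm (u : H) (p : V) : ℝ :=
  sSup (saddleQuotients a b c ε u p)

variable {a b c ε} {C : ℝ}

theorem saddleNorm_nonneg (hε : 0 ≤ ε) (v : H) (q : V) : 0 ≤ saddleNorm b ε v q := by
  have := weakSeminorm_nonneg (b := b) q
  unfold saddleNorm
  positivity

theorem saddleNorm_pos (hε : 0 < ε) {v : H} {q : V} (h : (v, q) ≠ (0, 0)) :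
    0 < saddleNorm b ε v q := by
  have := weakSeminorm_nonneg (b := b) q
  rcases eq_or_ne v 0 with rfl | hv
  · have hq : 0 < ‖q‖ := norm_pos_iff.mpr fun hq => h (by rw [hq])
    unfold saddleNorm
    positivity
  · have hv' : 0 < ‖v‖ := norm_pos_iff.mpr hv
    unfold saddleNorm
    positivity

theorem saddleNorm_zero_right (v : H) : saddleNorm b ε v 0 = ‖v‖ := by
  simp [saddleNorm, weakSeminorm_zero]

theorem saddleForm_le_mul (hC : 0 ≤ C) (haC : ∀ u v, |a u v| ≤ C * ‖u‖ * ‖v‖)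
    (hcC : ∀ p q, |c p q| ≤ C * ‖p‖ * ‖q‖) (hb : ∀ v q, |b v q| ≤ C * ‖v‖ * ‖q‖)
    (hε : 0 ≤ ε) (u : H) (p : V) (v : H) (q : V) :
    saddleForm a b c ε u p v q ≤ (C + 1) * saddleNorm b ε u p * saddleNorm b ε v q := by
  have hau : a u v ≤ C * ‖u‖ * ‖v‖ := (le_abs_self _).trans (haC u v)
  have hbp : b v p ≤ weakSeminorm b p * ‖v‖ := apply_le_weakSeminorm_mul_norm hb v p
  have hbq : -b u q ≤ weakSeminorm b q * ‖u‖ := by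
    simpa using apply_le_weakSeminorm_mul_norm hb (-u) q
  have hcp : ε ^ 2 * c p q ≤ C * (ε * ‖p‖) * (ε * ‖q‖) := by
    have := mul_le_mul_of_nonneg_left ((le_abs_self _).trans (hcC p q)) (sq_nonneg ε)
    linarith
  have hp := weakSeminorm_nonneg (b := b) p
  have hq := weakSeminorm_nonneg (b := b) q
  have hεp : 0 ≤ ε * ‖p‖ := by positivity
  have hεq : 0 ≤ ε * ‖q‖ := by positivity
  have h₁ : ‖u‖ * ‖v‖ + ε * ‖p‖ * (ε * ‖q‖) ≤ saddleNorm b ε u p * saddleNorm b ε v q := by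
    unfold saddleNorm
    nlinarith [mul_nonneg (norm_nonneg u) hq, mul_nonneg (norm_nonneg u) hεq,
      mul_nonneg hp (norm_nonneg v), mul_nonneg hp hq, mul_nonneg hp hεq,
      mul_nonneg hεp (norm_nonneg v), mul_nonneg hεp hq]
  have h₂ : weakSeminorm b p * ‖v‖ + weakSeminorm b q * ‖u‖ ≤
      saddleNorm b ε u p * saddleNorm b ε v q := by
    unfold saddleNorm
    nlinarith [mul_nonneg (norm_nonneg u) (norm_nonneg v), mul_nonneg (norm_nonneg u) hεq,
      mul_nonneg hp hq, mul_nonneg hp hεq, mul_nonneg hεp (norm_nonneg v), mul_nonneg hεp hq,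
      mul_nonneg hεp hεq]
  unfold saddleForm
  nlinarith [mul_le_mul_of_nonneg_left h₁ hC]

theorem saddleQuotients_le (hC : 0 ≤ C) (haC : ∀ u v, |a u v| ≤ C * ‖u‖ * ‖v‖)
    (hcC : ∀ p q, |c p q| ≤ C * ‖p‖ * ‖q‖) (hb : ∀ v q, |b v q| ≤ C * ‖v‖ * ‖q‖)
    (hε : 0 < ε) (u : H) (p : V) :
    ∀ r ∈ saddleQuotients a b c ε u p, r ≤ (C + 1) * saddleNorm b ε u p := by
  rintro r ⟨v, q, h, rfl⟩
  rw [div_le_iff₀ (saddleNorm_pos hε h)]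
  exact saddleForm_le_mul hC haC hcC hb hε.le u p v q

theorem saddleDualNorm_le (hC : 0 ≤ C) (haC : ∀ u v, |a u v| ≤ C * ‖u‖ * ‖v‖)
    (hcC : ∀ p q, |c p q| ≤ C * ‖p‖ * ‖q‖) (hb : ∀ v q, |b v q| ≤ C * ‖v‖ * ‖q‖)
    (hε : 0 < ε) (u : H) (p : V) :
    saddleDualNorm a b c ε u p ≤ (C + 1) * saddleNorm b ε u p :=
  Real.sSup_le (saddleQuotients_le hC haC hcC hb hε u p)
    (mul_nonneg (by positivity) (saddleNorm_nonneg hε.le u p))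

theorem saddleForm_le_saddleDualNorm_mul (hC : 0 ≤ C) (haC : ∀ u v, |a u v| ≤ C * ‖u‖ * ‖v‖)
    (hcC : ∀ p q, |c p q| ≤ C * ‖p‖ * ‖q‖) (hb : ∀ v q, |b v q| ≤ C * ‖v‖ * ‖q‖)
    (hε : 0 < ε) (u : H) (p : V) (v : H) (q : V) :
    saddleForm a b c ε u p v q ≤ saddleDualNorm a b c ε u p * saddleNorm b ε v q := by
  by_cases h : (v, q) = (0, 0)
  · obtain ⟨rfl, rfl⟩ := Prod.mk.inj h
    simp [saddleForm, saddleNorm, weakSeminorm_zero]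
  refine (div_le_iff₀ (saddleNorm_pos hε h)).mp (le_csSup ?_ ⟨v, q, h, rfl⟩)
  exact ⟨_, saddleQuotients_le hC haC hcC hb hε u p⟩

theorem inv_mul_le_saddleForm_self (haE : ∀ u, C⁻¹ * ‖u‖ ^ 2 ≤ a u u)
    (hcE : ∀ p, C⁻¹ * ‖p‖ ^ 2 ≤ c p p) (u : H) (p : V) :
    C⁻¹ * (‖u‖ ^ 2 + ε ^ 2 * ‖p‖ ^ 2) ≤ saddleForm a b c ε u p u p := by
  have := mul_le_mul_of_nonneg_left (hcE p) (sq_nonneg ε)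
  unfold saddleForm
  linarith [haE u]

theorem saddleDualNorm_nonneg (hC : 0 ≤ C) (haE : ∀ u, C⁻¹ * ‖u‖ ^ 2 ≤ a u u)
    (hcE : ∀ p, C⁻¹ * ‖p‖ ^ 2 ≤ c p p) (hε : 0 < ε) (u : H) (p : V) :
    0 ≤ saddleDualNorm a b c ε u p := by
  by_cases h : (u, p) = (0, 0)
  · obtain ⟨rfl, rfl⟩ := Prod.mk.inj h
    refine Real.sSup_nonneg ?_
    rintro r ⟨v, q, -, rfl⟩
    simp [saddleForm]
  refine Real.sSup_nonneg' ⟨_, ⟨u, p, h, rfl⟩, div_nonneg ?_ (saddleNorm_nonneg hε.le u p)⟩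
  exact (by positivity : (0 : ℝ) ≤ C⁻¹ * (‖u‖ ^ 2 + ε ^ 2 * ‖p‖ ^ 2)).trans
    (inv_mul_le_saddleForm_self haE hcE u p)

theorem weakSeminorm_le_saddleDualNorm_add (hC : 0 ≤ C) (haC : ∀ u v, |a u v| ≤ C * ‖u‖ * ‖v‖)
    (hcC : ∀ p q, |c p q| ≤ C * ‖p‖ * ‖q‖) (hb : ∀ v q, |b v q| ≤ C * ‖v‖ * ‖q‖)
    (haE : ∀ u, C⁻¹ * ‖u‖ ^ 2 ≤ a u u) (hcE : ∀ p, C⁻¹ * ‖p‖ ^ 2 ≤ c p p)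
    (hε : 0 < ε) (u : H) (p : V) :
    weakSeminorm b p ≤ saddleDualNorm a b c ε u p + C * ‖u‖ := by
  have hS := saddleDualNorm_nonneg (b := b) hC haE hcE hε u p
  refine weakSeminorm_le (by positivity) fun v _ => ?_
  have := saddleForm_le_saddleDualNorm_mul hC haC hcC hb hε u p v 0
  rw [saddleNorm_zero_right] at this
  simp only [saddleForm, map_zero, mul_zero, sub_zero, add_zero] at this
  linarith [neg_le_of_abs_le (haC u v)]

theorem saddleNorm_le_mul_saddleDualNorm (hC : 0 < C)
    (haC : ∀ u v, |a u v| ≤ C * ‖u‖ * ‖v‖) (hcC : ∀ p q, |c p q| ≤ C * ‖p‖ * ‖q‖)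
    (hb : ∀ v q, |b v q| ≤ C * ‖v‖ * ‖q‖) (haE : ∀ u, C⁻¹ * ‖u‖ ^ 2 ≤ a u u)
    (hcE : ∀ p, C⁻¹ * ‖p‖ ^ 2 ≤ c p p) (hε : 0 < ε) (u : H) (p : V) :
    saddleNorm b ε u p ≤ (2 * C * (1 + C) ^ 2 + 2) * saddleDualNorm a b c ε u p := by
  have hS := saddleDualNorm_nonneg (b := b) hC.le haE hcE hε u p
  have hcoercive : ‖u‖ ^ 2 + ε ^ 2 * ‖p‖ ^ 2 ≤
      C * (saddleDualNorm a b c ε u p * saddleNorm b ε u p) :=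
    (inv_mul_le_iff₀ hC).mp ((inv_mul_le_saddleForm_self haE hcE u p).trans
      (saddleForm_le_saddleDualNorm_mul hC.le haC hcC hb hε u p u p))
  have hweak := weakSeminorm_le_saddleDualNorm_add hC.le haC hcC hb haE hcE hε u p
  refine le_mul_of_le_add_of_sq_le_mul (Y := (1 + C) * (‖u‖ + ε * ‖p‖)) (by positivity) hS ?_ ?_
  · have : 0 ≤ C * (ε * ‖p‖) := by positivity
    unfold saddleNorm
    linarith
  · calc ((1 + C) * (‖u‖ + ε * ‖p‖)) ^ 2
        ≤ (1 + C) ^ 2 * (2 * (‖u‖ ^ 2 + ε ^ 2 * ‖p‖ ^ 2)) := by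
          rw [mul_pow]
          gcongr
          nlinarith [sq_nonneg (‖u‖ - ε * ‖p‖)]
      _ ≤ (1 + C) ^ 2 * (2 * (C * (saddleDualNorm a b c ε u p * saddleNorm b ε u p))) := by
          gcongr
      _ = _ := by ring

end SaddlePoint

/-- There exists a constant K > 0 depending only on C such that for every ε with
0 < ε ≤ 1 and every u ∈ H, p ∈ V, the quantity ‖u‖_H + |p|_V̄ + ε‖p‖_V is bounded above
and below, up to the factor K, by the supremum over (v, q) ≠ (0, 0) of
[a(u,v) + b(v,p) − b(u,q) + ε² c(p,q)] / (‖v‖_H + |q|_V̄ + ε‖q‖_V). -/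
theorem stmt_14 (C : ℝ) (hC : 0 < C) :
    ∃ K : ℝ, 0 < K ∧
      ∀ (H : Type) [NormedAddCommGroup H] [InnerProductSpace ℝ H] [CompleteSpace H]
        (V : Type) [NormedAddCommGroup V] [InnerProductSpace ℝ V] [CompleteSpace V]
        (a : H →ₗ[ℝ] H →ₗ[ℝ] ℝ) (c : V →ₗ[ℝ] V →ₗ[ℝ] ℝ) (b : H →ₗ[ℝ] V →ₗ[ℝ] ℝ),
        (∀ u v : H, a u v = a v u) →
        (∀ p q : V, c p q = c q p) →
        (∀ u v : H, |a u v| ≤ C * ‖u‖ * ‖v‖) →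
        (∀ u : H, C⁻¹ * ‖u‖ ^ 2 ≤ a u u) →
        (∀ p q : V, |c p q| ≤ C * ‖p‖ * ‖q‖) →
        (∀ p : V, C⁻¹ * ‖p‖ ^ 2 ≤ c p p) →
        (∀ (v : H) (q : V), |b v q| ≤ C * ‖v‖ * ‖q‖) →
        ∀ (ε : ℝ), 0 < ε → ε ≤ 1 →
          ∀ (u : H) (p : V),
            K⁻¹ * (‖u‖ + weakSeminorm b p + ε * ‖p‖) ≤
              sSup {r : ℝ | ∃ (v : H) (q : V), (v, q) ≠ (0, 0) ∧
                r = (a u v + b v p - b u q + ε ^ 2 * c p q) /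
                    (‖v‖ + weakSeminorm b q + ε * ‖q‖)} ∧
            sSup {r : ℝ | ∃ (v : H) (q : V), (v, q) ≠ (0, 0) ∧
                r = (a u v + b v p - b u q + ε ^ 2 * c p q) /
                    (‖v‖ + weakSeminorm b q + ε * ‖q‖)} ≤
              K * (‖u‖ + weakSeminorm b p + ε * ‖p‖) := by
  have hK : C + 1 ≤ 2 * C * (1 + C) ^ 2 + 2 := by nlinarith [mul_nonneg hC.le (sq_nonneg C)]
  refine ⟨2 * C * (1 + C) ^ 2 + 2, by positivity, ?_⟩
  intro H _ _ _ V _ _ _ a c b _ _ haC haE hcC hcE hb ε hε _ u p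
  refine ⟨(inv_mul_le_iff₀ (by positivity)).mpr ?_, ?_⟩
  · exact saddleNorm_le_mul_saddleDualNorm hC haC hcC hb haE hcE hε u p
  · refine (saddleDualNorm_le hC.le haC hcC hb hε u p).trans ?_
    exact mul_le_mul_of_nonneg_right hK (saddleNorm_nonneg hε.le u p)
end
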